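/- arXiv:1909.06421 — 5 statements merged into one kernel-verified Lean document; each statement's English description precedes it below -/
import Mathlib

section
/- Let d ≥ 2 and C > 0. For each n ∈ ℕ let γₙ : [0,1] → ℝ^d be a curve of class H² with constant speed ℓₙ > 0, and suppose that the elastic energies are uniformly bounded, i.e. ℓₙ^{-3} ∫₀¹ |γₙ''(t)|² dt + ℓₙ ≤ C for all n, and that ℓₙ → 0 as n → ∞. Then the oscillation of the unit tangent vector vanishes in the limit: lim_{n→∞} sup_{x,y ∈ [0,1]} |γₙ'(x)/ℓₙ − γₙ'(y)/ℓₙ| = 0. -/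
open MeasureTheory Set Filter

/-- If `γₙ : [0,1] → ℝ^d` are `H²` curves with constant speeds `ℓₙ > 0`,
uniformly bounded elastic energies `ℓₙ⁻³ ∫₀¹ ‖γₙ''‖² + ℓₙ ≤ C`, and `ℓₙ → 0`, then the
oscillation of the unit tangent vectors tends to zero uniformly. -/
theorem tangent_oscillation_vanishes
    (d : ℕ) (hd : 2 ≤ d) (C : ℝ) (hC : 0 < C)
    (γ γ' γ'' : ℕ → ℝ → EuclideanSpace ℝ (Fin d)) (ℓ : ℕ → ℝ)
    (hℓ : ∀ n, 0 < ℓ n)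
    (hderiv : ∀ n, ∀ t ∈ Icc (0:ℝ) 1, HasDerivWithinAt (γ n) (γ' n t) (Icc (0:ℝ) 1) t)
    (hAC : ∀ n, ∀ t ∈ Icc (0:ℝ) 1, γ' n t = γ' n 0 + ∫ s in (0:ℝ)..t, γ'' n s)
    (hint1 : ∀ n, IntervalIntegrable (γ'' n) volume 0 1)
    (hint2 : ∀ n, IntervalIntegrable (fun t => ‖γ'' n t‖ ^ 2) volume 0 1)
    (hspeed : ∀ n, ∀ t ∈ Icc (0:ℝ) 1, ‖γ' n t‖ = ℓ n)
    (henergy : ∀ n, ((ℓ n) ^ 3)⁻¹ * (∫ t in (0:ℝ)..1, ‖γ'' n t‖ ^ 2) + ℓ n ≤ C)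
    (hlen : Tendsto ℓ atTop (nhds 0)) :
    ∀ ε > (0:ℝ), ∃ N : ℕ, ∀ n ≥ N, ∀ x ∈ Icc (0:ℝ) 1, ∀ y ∈ Icc (0:ℝ) 1,
      ‖(ℓ n)⁻¹ • γ' n x - (ℓ n)⁻¹ • γ' n y‖ ≤ ε := by
  intro ε hε
  have hεC : 0 < ε ^ 2 / C := by positivity
  have hev : ∀ᶠ n in atTop, ℓ n < ε ^ 2 / C := hlen (Iio_mem_nhds hεC)
  rcases eventually_atTop.1 hev with ⟨N, hN⟩
  refine ⟨N, fun n hn x hx y hy => ?_⟩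
  set a : ℝ := Real.sqrt (C * ℓ n ^ 3) with ha_def
  have hℓn := hℓ n
  have ha : 0 < a := Real.sqrt_pos.2 (by positivity)
  have ha2 : a ^ 2 = C * ℓ n ^ 3 := Real.sq_sqrt (by positivity)
  -- the L² bound on γ''
  have hI : (∫ t in (0:ℝ)..1, ‖γ'' n t‖ ^ 2) ≤ C * ℓ n ^ 3 := by
    have h := henergy n
    have h3 : 0 < ℓ n ^ 3 := by positivity
    have h' : (ℓ n ^ 3)⁻¹ * (∫ t in (0:ℝ)..1, ‖γ'' n t‖ ^ 2) ≤ C - ℓ n := by linarith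
    have h'' := (inv_mul_le_iff₀ h3).mp h'
    nlinarith [h'', hℓn]
  -- L¹ bound via AM-GM
  have hL1 : (∫ t in (0:ℝ)..1, ‖γ'' n t‖) ≤ a := by
    have hmono : (∫ t in (0:ℝ)..1, ‖γ'' n t‖)
        ≤ ∫ t in (0:ℝ)..1, (‖γ'' n t‖ ^ 2 / (2 * a) + a / 2) := by
      apply intervalIntegral.integral_mono_on (by norm_num) (hint1 n).norm
      · exact ((hint2 n).div_const _).add intervalIntegrable_const
      · intro t ht
        have h2a : 0 < 2 * a := by positivity
        have hkey : ‖γ'' n t‖ ≤ (‖γ'' n t‖ ^ 2 + a ^ 2) / (2 * a) := by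
          rw [le_div_iff₀ h2a]; nlinarith [sq_nonneg (‖γ'' n t‖ - a)]
        have hsplit : (‖γ'' n t‖ ^ 2 + a ^ 2) / (2 * a)
            = ‖γ'' n t‖ ^ 2 / (2 * a) + a / 2 := by
          field_simp
        linarith
    have heq : (∫ t in (0:ℝ)..1, (‖γ'' n t‖ ^ 2 / (2 * a) + a / 2))
        = (∫ t in (0:ℝ)..1, ‖γ'' n t‖ ^ 2) / (2 * a) + a / 2 := by
      rw [intervalIntegral.integral_add ((hint2 n).div_const _) intervalIntegrable_const,
        intervalIntegral.integral_div, intervalIntegral.integral_const]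
      simp
    calc (∫ t in (0:ℝ)..1, ‖γ'' n t‖) ≤ _ := hmono
      _ = _ := heq
      _ ≤ (C * ℓ n ^ 3) / (2 * a) + a / 2 := by gcongr
      _ = a := by
          have ha' : a ≠ 0 := ha.ne'
          rw [← ha2]; field_simp; ring
  -- bound on the tangent difference
  have main : ∀ u ∈ Icc (0:ℝ) 1, ∀ v ∈ Icc (0:ℝ) 1, v ≤ u →
      ‖γ' n u - γ' n v‖ ≤ a := by
    intro u hu v hv hvu
    have hiu : IntervalIntegrable (γ'' n) volume 0 u :=
      (hint1 n).mono_set (by rw [uIcc_of_le hu.1, uIcc_of_le zero_le_one]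
                             exact Icc_subset_Icc le_rfl hu.2)
    have hiv : IntervalIntegrable (γ'' n) volume 0 v :=
      (hint1 n).mono_set (by rw [uIcc_of_le hv.1, uIcc_of_le zero_le_one]
                             exact Icc_subset_Icc le_rfl hv.2)
    have hdiff : γ' n u - γ' n v = ∫ s in v..u, γ'' n s := by
      rw [hAC n u hu, hAC n v hv, add_sub_add_left_eq_sub]
      exact intervalIntegral.integral_interval_sub_left hiu hiv
    rw [hdiff]
    calc ‖∫ s in v..u, γ'' n s‖ ≤ ∫ s in v..u, ‖γ'' n s‖ :=
          intervalIntegral.norm_integral_le_integral_norm hvu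
      _ ≤ ∫ s in (0:ℝ)..1, ‖γ'' n s‖ := by
          apply intervalIntegral.integral_mono_interval hv.1 hvu hu.2
          · filter_upwards with t using norm_nonneg _
          · exact (hint1 n).norm
      _ ≤ a := hL1
  -- conclusion
  have hbound : ‖γ' n x - γ' n y‖ ≤ a := by
    rcases le_total y x with h | h
    · exact main x hx y hy h
    · rw [norm_sub_rev]; exact main y hy x hx h
  have key : ‖(ℓ n)⁻¹ • γ' n x - (ℓ n)⁻¹ • γ' n y‖ = (ℓ n)⁻¹ * ‖γ' n x - γ' n y‖ := by
    rw [← smul_sub, norm_smul, Real.norm_eq_abs, abs_of_pos (by positivity)]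
  rw [key]
  have ha_eq : (ℓ n)⁻¹ * a = Real.sqrt (C * ℓ n) := by
    rw [ha_def]
    have : C * ℓ n ^ 3 = (C * ℓ n) * (ℓ n) ^ 2 := by ring
    rw [this, Real.sqrt_mul (by positivity), Real.sqrt_sq hℓn.le]
    field_simp
  calc (ℓ n)⁻¹ * ‖γ' n x - γ' n y‖ ≤ (ℓ n)⁻¹ * a := by gcongr
    _ = Real.sqrt (C * ℓ n) := ha_eq
    _ ≤ Real.sqrt (ε ^ 2) := by
        apply Real.sqrt_le_sqrt
        have h2 : ℓ n * C < ε ^ 2 := (lt_div_iff₀ hC).mp (hN n hn)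
        nlinarith [h2]
    _ = ε := Real.sqrt_sq hε.le
end

section
/- (Change of train tracks.) For every ε > 0 there exists h₀ > 0 such that for every h ∈ (0, h₀) there exist Λ > 0, b > 0, and an arclength-parametrized curve γ : [0, Λ] → ℝ² of class H² with: γ(0) = (0,0), γ(Λ) = (b, h), γ'(0) = γ'(Λ) = (1, 0), the image of γ contained in the horizontal strip ℝ × [0, h], and satisfying the asymptotic bounds |b − 2√h| ≤ ε √h and |∫₀^Λ |γ''(s)|² ds + Λ − 4√h| ≤ ε √h. In other words, one can connect two parallel horizontal lines at distance h by a curve with horizontal tangents at both endpoints, spanning a horizontal interval of length b = 2√h(1 + o(1)) and with elastic energy ∫|k|² ds + length = 4√h(1 + o(1)) as h → 0. -/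
/-!
Glue two unit circle arcs of angle `θ = 2t`: the first turns left by `θ`, the second is its
point reflection through the junction and turns back, so the curve ends with the tangent it started
with. It rises by `2 - 2 cos θ = 4 sin² t`, which equals `h` for `t = arcsin (√h / 2)`, advances
by `2 sin θ`, and has length `2θ` and, the curvature being `±1`, bending energy `∫ |k|² = 2θ`.
With `√h = 2 sin t` the errors `|2 sin 2t - 2√h|` and `|8t - 4√h|` are `O(t²) √h`, and
`t² ≤ h → 0`. The curvature jumps from `1` to `-1` at the junction, so the tangent is only
differentiable off that point, which is enough for the fundamental theorem of calculus.
-/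

open Real Set MeasureTheory Filter

section Gluing

variable {E : Type*} [NormedAddCommGroup E] [NormedSpace ℝ E] {f g f' g' : ℝ → E} {a x : ℝ}

theorem hasDerivAt_ite_le_of_ne (hf : HasDerivAt f (f' x) x) (hg : HasDerivAt g (g' x) x)
    (hx : x ≠ a) :
    HasDerivAt (fun y => if y ≤ a then f y else g y) (if x ≤ a then f' x else g' x) x := by
  rcases hx.lt_or_gt with hx | hx
  · rw [if_pos hx.le]
    exact hf.congr_of_eventuallyEq <|
      eventually_of_mem (Iio_mem_nhds hx) fun y hy => if_pos (le_of_lt hy)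
  · rw [if_neg hx.not_ge]
    exact hg.congr_of_eventuallyEq <|
      eventually_of_mem (Ioi_mem_nhds hx) fun y hy => if_neg (not_le.2 hy)

theorem hasDerivAt_ite_le (hf : ∀ y, HasDerivAt f (f' y) y) (hg : ∀ y, HasDerivAt g (g' y) y)
    (h : f a = g a) (h' : f' a = g' a) (x : ℝ) :
    HasDerivAt (fun y => if y ≤ a then f y else g y) (if x ≤ a then f' x else g' x) x := by
  rcases ne_or_eq x a with hx | rfl
  · exact hasDerivAt_ite_le_of_ne (hf x) (hg x) hx
  rw [if_pos le_rfl]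
  have hleft : HasDerivWithinAt (fun y => if y ≤ x then f y else g y) (f' x) (Iic x) x :=
    (hf x).hasDerivWithinAt.congr (fun y hy => if_pos hy) (if_pos le_rfl)
  have hright : HasDerivWithinAt (fun y => if y ≤ x then f y else g y) (f' x) (Ici x) x := by
    refine h' ▸ (hg x).hasDerivWithinAt.congr (fun y hy => ?_) (by simp [h])
    rcases (mem_Ici.1 hy).eq_or_lt with rfl | hy
    · simp [h]
    · exact if_neg hy.not_ge
  simpa [Iic_union_Ici] using hleft.union hright

theorem integral_ite_le_eq_sub [CompleteSpace E] (hf : ∀ y, HasDerivAt f (f' y) y)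
    (hg : ∀ y, HasDerivAt g (g' y) y) (h : f a = g a) {u v : ℝ}
    (hint : IntervalIntegrable (fun y => if y ≤ a then f' y else g' y) volume u v) :
    ∫ y in u..v, (if y ≤ a then f' y else g' y) =
      (if v ≤ a then f v else g v) - (if u ≤ a then f u else g u) := by
  have hcont : Continuous fun y => if y ≤ a then f y else g y :=
    Continuous.if_le (continuous_iff_continuousAt.2 fun y => (hf y).continuousAt)
      (continuous_iff_continuousAt.2 fun y => (hg y).continuousAt) continuous_id continuous_const
      fun y hy => hy ▸ h
  exact integral_eq_of_hasDerivAt_off_countable _ _ (countable_singleton a) hcont.continuousOn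
    (fun y hy => hasDerivAt_ite_le_of_ne (hf y) (hg y) hy.2) hint

end Gluing

theorem HasDerivAt.euclideanSpace_two {f g : ℝ → ℝ} {f' g' x : ℝ} (hf : HasDerivAt f f' x)
    (hg : HasDerivAt g g' x) : HasDerivAt (fun t => !₂[f t, g t]) !₂[f', g'] x := by
  have : HasDerivAt (fun t => ![f t, g t]) ![f', g'] x :=
    hasDerivAt_pi.2 (Fin.forall_fin_two.2 ⟨by simpa using hf, by simpa using hg⟩)
  exact (PiLp.hasFDerivAt_toLp 2 _).comp_hasDerivAt x this

noncomputable def unitArc (s : ℝ) : EuclideanSpace ℝ (Fin 2) := !₂[sin s, 1 - cos s]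

noncomputable def unitArcTangent (s : ℝ) : EuclideanSpace ℝ (Fin 2) := !₂[cos s, sin s]

noncomputable def unitArcCurvature (s : ℝ) : EuclideanSpace ℝ (Fin 2) := !₂[-sin s, cos s]

@[simp]
theorem unitArc_apply_one (s : ℝ) : unitArc s 1 = 1 - cos s := rfl

theorem continuous_unitArcCurvature : Continuous unitArcCurvature := by
  unfold unitArcCurvature; fun_prop

theorem hasDerivAt_unitArc (s : ℝ) : HasDerivAt unitArc (unitArcTangent s) s := by
  have h := (hasDerivAt_sin s).euclideanSpace_two ((hasDerivAt_cos s).const_sub 1)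
  rwa [neg_neg] at h

theorem hasDerivAt_unitArcTangent (s : ℝ) : HasDerivAt unitArcTangent (unitArcCurvature s) s :=
  (hasDerivAt_cos s).euclideanSpace_two (hasDerivAt_sin s)

theorem norm_unitArcTangent (s : ℝ) : ‖unitArcTangent s‖ = 1 := by
  simp [unitArcTangent, EuclideanSpace.norm_eq]

theorem norm_unitArcCurvature (s : ℝ) : ‖unitArcCurvature s‖ = 1 := by
  simp [unitArcCurvature, EuclideanSpace.norm_eq]

noncomputable def trainTrack (θ s : ℝ) : EuclideanSpace ℝ (Fin 2) :=
  if s ≤ θ then unitArc s else (2 : ℝ) • unitArc θ - unitArc (2 * θ - s)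

noncomputable def trainTrackTangent (θ s : ℝ) : EuclideanSpace ℝ (Fin 2) :=
  if s ≤ θ then unitArcTangent s else unitArcTangent (2 * θ - s)

noncomputable def trainTrackCurvature (θ s : ℝ) : EuclideanSpace ℝ (Fin 2) :=
  if s ≤ θ then unitArcCurvature s else -unitArcCurvature (2 * θ - s)

theorem hasDerivAt_trainTrack (θ s : ℝ) :
    HasDerivAt (trainTrack θ) (trainTrackTangent θ s) s := by
  refine hasDerivAt_ite_le (g := fun s => (2 : ℝ) • unitArc θ - unitArc (2 * θ - s))
    (g' := fun s => unitArcTangent (2 * θ - s)) hasDerivAt_unitArc (fun y => ?_) ?_ ?_ s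
  · simpa using
      ((hasDerivAt_unitArc (2 * θ - y)).comp_const_sub (2 * θ) y).const_sub ((2 : ℝ) • unitArc θ)
  · simp [two_mul, two_smul]
  · simp [two_mul]

theorem norm_trainTrackTangent (θ s : ℝ) : ‖trainTrackTangent θ s‖ = 1 := by
  unfold trainTrackTangent; split_ifs <;> exact norm_unitArcTangent _

theorem norm_trainTrackCurvature (θ s : ℝ) : ‖trainTrackCurvature θ s‖ = 1 := by
  unfold trainTrackCurvature; split_ifs <;> simp [norm_unitArcCurvature]

theorem sq_norm_trainTrackCurvature (θ : ℝ) :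
    (fun s => ‖trainTrackCurvature θ s‖ ^ 2) = fun _ => 1 := by
  simp [norm_trainTrackCurvature]

theorem intervalIntegrable_trainTrackCurvature (θ u v : ℝ) :
    IntervalIntegrable (trainTrackCurvature θ) volume u v := by
  refine (intervalIntegrable_const (c := (1 : ℝ))).mono_fun ?_ ?_
  · exact (Measurable.ite measurableSet_Iic continuous_unitArcCurvature.measurable
      (continuous_unitArcCurvature.comp (by fun_prop)).neg.measurable).aestronglyMeasurable
  · exact ae_of_all _ fun s => by simp [norm_trainTrackCurvature]

theorem trainTrackTangent_eq_add_integral (θ s : ℝ) :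
    trainTrackTangent θ s = trainTrackTangent θ 0 + ∫ u in (0 : ℝ)..s, trainTrackCurvature θ u := by
  unfold trainTrackCurvature
  rw [integral_ite_le_eq_sub hasDerivAt_unitArcTangent
    (fun y => (hasDerivAt_unitArcTangent (2 * θ - y)).comp_const_sub (2 * θ) y)
    (by simp [two_mul]) (intervalIntegrable_trainTrackCurvature θ 0 s)]
  simp [trainTrackTangent]

theorem trainTrack_zero {θ : ℝ} (hθ : 0 ≤ θ) : trainTrack θ 0 = 0 := by
  ext i; fin_cases i <;> simp [trainTrack, unitArc, hθ]

theorem trainTrack_two_mul {θ : ℝ} (hθ : 0 < θ) :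
    trainTrack θ (2 * θ) = !₂[2 * sin θ, 2 - 2 * cos θ] := by
  ext i; fin_cases i <;> simp [trainTrack, unitArc, hθ]; ring

theorem trainTrackTangent_zero {θ : ℝ} (hθ : 0 ≤ θ) : trainTrackTangent θ 0 = !₂[1, 0] := by
  simp [trainTrackTangent, unitArcTangent, hθ]

theorem trainTrackTangent_two_mul {θ : ℝ} (hθ : 0 < θ) :
    trainTrackTangent θ (2 * θ) = !₂[1, 0] := by
  simp [trainTrackTangent, unitArcTangent, hθ]

theorem trainTrack_apply_one_mem_Icc {θ s : ℝ} (hθ : θ ≤ π) (hs : s ∈ Icc 0 (2 * θ)) :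
    trainTrack θ s 1 ∈ Icc 0 (2 - 2 * cos θ) := by
  have hcos : ∀ u ∈ Icc 0 θ, 0 ≤ 1 - cos u ∧ 1 - cos u ≤ 1 - cos θ := fun u hu =>
    ⟨by linarith [cos_le_one u], by linarith [cos_le_cos_of_nonneg_of_le_pi hu.1 hθ hu.2]⟩
  unfold trainTrack
  split_ifs with h
  · obtain ⟨h0, h1⟩ := hcos s ⟨hs.1, h⟩
    simp only [unitArc_apply_one, mem_Icc]
    constructor <;> linarith [cos_le_one θ]
  · obtain ⟨h0, h1⟩ := hcos (2 * θ - s) ⟨by linarith [hs.2], by linarith⟩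
    simp only [PiLp.sub_apply, PiLp.smul_apply, smul_eq_mul, unitArc_apply_one, mem_Icc]
    constructor <;> linarith

theorem arcsin_le_two_mul {y : ℝ} (hy : 0 ≤ y) : arcsin y ≤ 2 * y := by
  rcases le_or_gt y 1 with hy1 | hy1
  · have h := mul_le_sin (arcsin_nonneg.2 hy) (arcsin_le_pi_div_two y)
    rw [sin_arcsin (by linarith) hy1, div_mul_eq_mul_div, div_le_iff₀ pi_pos] at h
    nlinarith [pi_le_four, arcsin_nonneg.2 hy]
  · linarith [arcsin_le_pi_div_two y, pi_le_four]

theorem abs_two_sin_two_mul_sub_le {t : ℝ} (ht0 : 0 ≤ t) (htπ : t ≤ π) :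
    |2 * sin (2 * t) - 2 * (2 * sin t)| ≤ t ^ 2 * (2 * sin t) := by
  have hsin := sin_nonneg_of_nonneg_of_le_pi ht0 htπ
  have hcos := one_sub_sq_div_two_le_cos (x := t)
  rw [sin_two_mul, abs_le]
  constructor <;> nlinarith [cos_le_one t]

theorem abs_eight_mul_sub_eight_sin_le {t : ℝ} (ht0 : 0 < t) (ht1 : t ≤ 1) :
    |8 * t - 8 * sin t| ≤ t ^ 2 * (2 * sin t) := by
  have hle := sin_le ht0.le
  have hgt := (sin_gt_sub_cube ht0).le
  have hgt' := mul_le_mul_of_nonneg_left hgt (sq_nonneg t)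
  have ht5 : t ^ 5 ≤ t ^ 3 := pow_le_pow_of_le_one ht0.le ht1 (by norm_num)
  rw [abs_of_nonneg (by linarith)]
  nlinarith

/-- **Change of train tracks.** For every `ε > 0` there is `h₀ > 0` such that
for every `h ∈ (0, h₀)` there exist `Λ > 0`, `b > 0` and an arclength-parametrized `H²`
curve `γ : [0, Λ] → ℝ²` joining `(0,0)` to `(b,h)`, with horizontal unit tangent `(1,0)` at
both endpoints, contained in the strip `ℝ × [0,h]`, with `|b - 2√h| ≤ ε √h` and elastic
energy `∫ ‖γ''‖² + Λ` within `ε √h` of `4√h`. -/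
theorem change_of_train_tracks :
    ∀ ε > (0:ℝ), ∃ h₀ > (0:ℝ), ∀ h : ℝ, 0 < h → h < h₀ →
      ∃ (Λ b : ℝ) (γ γ' γ'' : ℝ → EuclideanSpace ℝ (Fin 2)),
        0 < Λ ∧ 0 < b ∧
        (∀ s ∈ Icc (0:ℝ) Λ, HasDerivWithinAt γ (γ' s) (Icc (0:ℝ) Λ) s) ∧
        (∀ s ∈ Icc (0:ℝ) Λ, γ' s = γ' 0 + ∫ u in (0:ℝ)..s, γ'' u) ∧
        IntervalIntegrable γ'' volume 0 Λ ∧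
        IntervalIntegrable (fun s => ‖γ'' s‖ ^ 2) volume 0 Λ ∧
        (∀ s ∈ Icc (0:ℝ) Λ, ‖γ' s‖ = 1) ∧
        γ 0 = 0 ∧ (γ Λ) 0 = b ∧ (γ Λ) 1 = h ∧
        (γ' 0) 0 = 1 ∧ (γ' 0) 1 = 0 ∧ γ' Λ = γ' 0 ∧
        (∀ s ∈ Icc (0:ℝ) Λ, (γ s) 1 ∈ Icc (0:ℝ) h) ∧
        |b - 2 * Real.sqrt h| ≤ ε * Real.sqrt h ∧
        |(∫ s in (0:ℝ)..Λ, ‖γ'' s‖ ^ 2) + Λ - 4 * Real.sqrt h| ≤ ε * Real.sqrt h := by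
  intro ε hε
  refine ⟨min 1 ε, by positivity, fun h hpos hlt => ?_⟩
  have hsqrt : √h < 1 := (sqrt_lt' one_pos).2 (by linarith [min_le_left 1 ε])
  set t := arcsin (√h / 2)
  have ht0 : 0 < t := arcsin_pos.2 (by positivity)
  have hsin : 2 * sin t = √h := by
    rw [sin_arcsin (by linarith [sqrt_nonneg h]) (by linarith)]; ring
  have ht : t ≤ √h := by linarith [arcsin_le_two_mul (y := √h / 2) (by positivity)]
  have ht1 : t ≤ 1 := by linarith
  have hε' : t ^ 2 * √h ≤ ε * √h := by
    have : t ^ 2 ≤ h := by nlinarith [sq_sqrt hpos.le]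
    exact mul_le_mul_of_nonneg_right (by linarith [min_le_right 1 ε]) (sqrt_nonneg h)
  have hθ0 : 0 < 2 * t := by positivity
  have hθ : 2 * t < π := by linarith [pi_gt_three]
  have hheight : 2 - 2 * cos (2 * t) = h := by
    rw [cos_two_mul, cos_sq', ← sq_sqrt hpos.le, ← hsin]; ring
  rw [← hsin] at hε' ⊢
  refine ⟨2 * (2 * t), 2 * sin (2 * t), trainTrack (2 * t), trainTrackTangent (2 * t),
    trainTrackCurvature (2 * t), by positivity, by nlinarith [sin_pos_of_pos_of_lt_pi hθ0 hθ],
    fun s _ => (hasDerivAt_trainTrack _ s).hasDerivWithinAt,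
    fun s _ => trainTrackTangent_eq_add_integral _ s, intervalIntegrable_trainTrackCurvature _ _ _,
    by simp [sq_norm_trainTrackCurvature], fun s _ => norm_trainTrackTangent _ s,
    trainTrack_zero hθ0.le, by simp [trainTrack_two_mul hθ0],
    by simp [trainTrack_two_mul hθ0, hheight], by simp [trainTrackTangent_zero hθ0.le],
    by simp [trainTrackTangent_zero hθ0.le],
    by rw [trainTrackTangent_two_mul hθ0, trainTrackTangent_zero hθ0.le],
    fun s hs => hheight ▸ trainTrack_apply_one_mem_Icc hθ.le hs,
    (abs_two_sin_two_mul_sub_le ht0.le (by linarith)).trans hε', ?_⟩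
  rw [sq_norm_trainTrackCurvature, intervalIntegral.integral_const, smul_eq_mul, mul_one]
  exact (congrArg abs (by ring)).le.trans ((abs_eight_mul_sub_eight_sin_le ht0 ht1).trans hε')
end

section
/- (Straightening at vertices.) Let d ≥ 2 and let γ : [0,1] → ℝ^d be an H² curve with constant speed |γ'| ≡ ℓ > 0. Then for every ε > 0 there exist an H² curve γ̃ : [0,1] → ℝ^d with constant speed ℓ̃ > 0 and a number a ∈ (0,1) such that: (i) on [0, a] the curve γ̃ is the straight segment γ̃(t) = γ(0) + t ℓ̃ γ'(0)/ℓ, whose length a·ℓ̃ is at most ε; (ii) γ̃(0) = γ(0); (iii) ‖γ − γ̃‖_{H²(0,1)} ≤ ε; and (iv) the elastic energies satisfy ℓ̃^{-3} ∫₀¹ |γ̃''|² dt + ℓ̃ ≤ (1 + ε)(ℓ^{-3} ∫₀¹ |γ''|² dt + ℓ). -/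
/-!
Run `γ` with a delay `a`, preceded by its tangent segment at `γ 0` traversed at the same speed `ℓ`
during the time `a`; the tail of `γ` after time `1 - a` is cut off. The new curve has speed `ℓ`,
and its acceleration is that of `γ`, translated by `a` and set to zero on `[0, a]`, so its
bending energy is at most that of `γ`. As `a → 0⁺`, the new curve and its velocity converge to
`γ` and `γ'` uniformly on `[0, 1]` (uniform continuity on a compact set), and the accelerations
converge in `L²` by the continuity of translations in `L²(ℝ)`; hence the `H²` distance tends to `0`.
-/

open MeasureTheory Set Filter Topology
open scoped ENNReal Interval

def delayConst {α : Type*} (a : ℝ) (f : ℝ → α) (t : ℝ) : α := f (max (t - a) 0)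

noncomputable def delayZero {α : Type*} [Zero α] (a : ℝ) (f : ℝ → α) (t : ℝ) : α :=
  (Ioc 0 1).indicator f (t - a)

def prependSegment {E : Type*} [AddCommGroup E] [Module ℝ E] (a : ℝ) (γ : ℝ → E) (v : E)
    (t : ℝ) : E :=
  γ (max (t - a) 0) + min t a • v

theorem max_sub_zero_mem_Icc {a t : ℝ} (ha : 0 ≤ a) (ht : t ∈ Icc (0:ℝ) 1) :
    max (t - a) 0 ∈ Icc (0:ℝ) 1 :=
  ⟨le_max_right _ _, max_le (by linarith [ht.2]) zero_le_one⟩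

theorem delayConst_of_le {α : Type*} {a t : ℝ} (f : ℝ → α) (h : t ≤ a) :
    delayConst a f t = f 0 := by
  rw [delayConst, max_eq_right (sub_nonpos.2 h)]

theorem delayConst_of_ge {α : Type*} {a t : ℝ} (f : ℝ → α) (h : a ≤ t) :
    delayConst a f t = f (t - a) := by
  rw [delayConst, max_eq_left (sub_nonneg.2 h)]

section NormedAddCommGroup

variable {E : Type*} [NormedAddCommGroup E]

theorem MeasureTheory.MemLp.integral_sq_norm_eq {α : Type*} [MeasurableSpace α] {μ : Measure α}
    {f : α → E} (hf : MemLp f 2 μ) :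
    ∫ x, ‖f x‖ ^ 2 ∂μ = (eLpNorm f 2 μ).toReal ^ 2 := by
  rw [hf.eLpNorm_eq_integral_rpow_norm two_ne_zero ENNReal.ofNat_ne_top,
    ENNReal.toReal_ofReal (by positivity), ← Real.rpow_natCast,
    ← Real.rpow_mul (integral_nonneg fun x => by positivity)]
  simp

theorem tendsto_eLpNorm_comp_sub_sub {p : ℝ≥0∞} (hp₁ : 1 ≤ p) (hp : p ≠ ∞) {g : ℝ → E}
    (hg : MemLp g p volume) :
    Tendsto (fun a : ℝ => eLpNorm (fun t => g (t - a) - g t) p volume) (𝓝 0) (𝓝 0) := by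
  have := Fact.mk hp₁
  have := Fact.mk hp
  have hcont : Continuous fun a : ℝ => DomAddAct.mk (-a) +ᵥ hg.toLp g := by fun_prop
  have := tendsto_iff_edist_tendsto_0.1 (hcont.tendsto 0)
  simp only [neg_zero, DomAddAct.mk_zero, zero_vadd] at this
  refine this.congr fun a => ?_
  rw [DomAddAct.mk_vadd_toLp, Lp.edist_toLp_toLp]
  simp only [vadd_eq_add, neg_add_eq_sub]
  rfl

theorem tendsto_integral_sq_norm_sub_comp_sub {g : ℝ → E} (hg : MemLp g 2 volume) :
    Tendsto (fun a : ℝ => ∫ t, ‖g t - g (t - a)‖ ^ 2) (𝓝 0) (𝓝 0) := by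
  have h := ((ENNReal.tendsto_toReal ENNReal.zero_ne_top).comp
    (tendsto_eLpNorm_comp_sub_sub one_le_two ENNReal.ofNat_ne_top hg)).pow 2
  rw [ENNReal.toReal_zero, zero_pow two_ne_zero] at h
  refine h.congr fun a => ?_
  have hga : MemLp (fun t => g (t - a)) 2 volume :=
    hg.comp_measurePreserving (measurePreserving_sub_right volume a)
  refine (hga.sub hg).integral_sq_norm_eq.symm.trans ?_
  simp only [Pi.sub_apply, norm_sub_rev]

theorem tendstoUniformlyOn_of_continuousOn_prod {α β : Type*} [TopologicalSpace α]
    [TopologicalSpace β] {F : α → β → E} {s : Set α} {k : Set β} {q : α} (hk : IsCompact k)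
    (hF : ContinuousOn (Function.uncurry F) (s ×ˢ k)) (hq : q ∈ s) :
    TendstoUniformlyOn F (F q) (𝓝[s] q) k := by
  refine Metric.tendstoUniformlyOn_iff.2 fun ε hε => ?_
  obtain ⟨v, hv, hvF⟩ := hk.mem_uniformity_of_prod hF hq (Metric.dist_mem_uniformity hε)
  filter_upwards [hv] with p hp x hx
  rw [dist_comm]
  exact hvF p hp x hx

theorem tendsto_integral_sq_norm_sub_of_tendstoUniformlyOn {ι : Type*} {l : Filter ι}
    {F : ι → ℝ → E} {f : ℝ → E} {a b : ℝ} (h : TendstoUniformlyOn F f l (Ι a b)) :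
    Tendsto (fun i => ∫ t in a..b, ‖f t - F i t‖ ^ 2) l (𝓝 0) := by
  refine Metric.tendsto_nhds.2 fun ε hε => ?_
  set η := Real.sqrt (ε / (|b - a| + 1)) with hη
  have hη0 : 0 < η := Real.sqrt_pos.2 (by positivity)
  have hηε : η ^ 2 * |b - a| < ε := by
    rw [hη, Real.sq_sqrt (by positivity), div_mul_eq_mul_div, div_lt_iff₀ (by positivity)]
    nlinarith [abs_nonneg (b - a)]
  filter_upwards [Metric.tendstoUniformlyOn_iff.1 h η hη0] with i hi
  rw [Real.dist_0_eq_abs, ← Real.norm_eq_abs]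
  refine lt_of_le_of_lt (intervalIntegral.norm_integral_le_of_norm_le_const fun t ht => ?_) hηε
  rw [Real.norm_eq_abs, abs_of_nonneg (by positivity), ← dist_eq_norm]
  exact pow_le_pow_left₀ dist_nonneg (hi t ht).le 2

theorem sq_norm_delayZero (a : ℝ) (f : ℝ → E) (t : ℝ) :
    ‖delayZero a f t‖ ^ 2 = (Ioc 0 1).indicator (fun s => ‖f s‖ ^ 2) (t - a) := by
  by_cases h : t - a ∈ Ioc (0:ℝ) 1 <;> simp [delayZero, h]

theorem integral_sq_norm_delayZero_le {f : ℝ → E}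
    (hf : IntervalIntegrable (fun t => ‖f t‖ ^ 2) volume 0 1) (a : ℝ) :
    ∫ t in (0:ℝ)..1, ‖delayZero a f t‖ ^ 2 ≤ ∫ t in (0:ℝ)..1, ‖f t‖ ^ 2 := by
  set F := (Ioc (0:ℝ) 1).indicator fun s => ‖f s‖ ^ 2
  have hF : Integrable F :=
    ((intervalIntegrable_iff_integrableOn_Ioc_of_le zero_le_one).1 hf).integrable_indicator
      measurableSet_Ioc
  have hF0 : ∀ t, 0 ≤ F (t - a) := fun t => indicator_nonneg (fun s _ => by positivity) _
  simp_rw [sq_norm_delayZero]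
  calc ∫ t in (0:ℝ)..1, F (t - a)
      = ∫ t in Ioc 0 1, F (t - a) := intervalIntegral.integral_of_le zero_le_one
    _ ≤ ∫ t, F (t - a) := setIntegral_le_integral (hF.comp_sub_right a) (ae_of_all _ hF0)
    _ = ∫ t, F t := integral_sub_right_eq_self F a
    _ = ∫ t in Ioc 0 1, ‖f t‖ ^ 2 := integral_indicator measurableSet_Ioc
    _ = ∫ t in (0:ℝ)..1, ‖f t‖ ^ 2 := (intervalIntegral.integral_of_le zero_le_one).symm

theorem tendsto_integral_sq_norm_sub_delayZero {f : ℝ → E}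
    (hf : MemLp ((Ioc 0 1).indicator f) 2 volume) :
    Tendsto (fun a => ∫ t in (0:ℝ)..1, ‖f t - delayZero a f t‖ ^ 2) (𝓝 0) (𝓝 0) := by
  set G := (Ioc (0:ℝ) 1).indicator f
  refine squeeze_zero (fun a => intervalIntegral.integral_nonneg zero_le_one
    fun t _ => by positivity) (fun a => ?_) (tendsto_integral_sq_norm_sub_comp_sub hf)
  have hGa : MemLp (fun t => G (t - a)) 2 volume :=
    hf.comp_measurePreserving (measurePreserving_sub_right volume a)
  calc ∫ t in (0:ℝ)..1, ‖f t - delayZero a f t‖ ^ 2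
      = ∫ t in Ioc 0 1, ‖G t - G (t - a)‖ ^ 2 := by
        rw [intervalIntegral.integral_of_le zero_le_one]
        refine setIntegral_congr_fun measurableSet_Ioc fun t ht => ?_
        simp only [delayZero, G, indicator_of_mem ht]
    _ ≤ ∫ t, ‖G t - G (t - a)‖ ^ 2 :=
        setIntegral_le_integral ((hf.sub hGa).integrable_norm_pow two_ne_zero)
          (ae_of_all _ fun t => by positivity)

end NormedAddCommGroup

section NormedSpace

variable {E : Type*} [NormedAddCommGroup E] [NormedSpace ℝ E]

theorem hasDerivWithinAt_of_Iic_of_Ici {f f' : ℝ → E} {s : Set ℝ} {c x : ℝ}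
    (hle : x ≤ c → HasDerivWithinAt f (f' x) (s ∩ Iic c) x)
    (hge : c ≤ x → HasDerivWithinAt f (f' x) (s ∩ Ici c) x) :
    HasDerivWithinAt f (f' x) s x := by
  have hIic : HasDerivWithinAt f (f' x) (s ∩ Iic c) x := by
    rcases le_or_gt x c with hxc | hcx
    · exact hle hxc
    · refine hasDerivWithinAt_iff_hasFDerivWithinAt.2 (.of_notMem_closure fun hx => ?_)
      exact hcx.not_ge (closure_minimal inter_subset_right isClosed_Iic hx)
  have hIci : HasDerivWithinAt f (f' x) (s ∩ Ici c) x := by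
    rcases le_or_gt c x with hcx | hxc
    · exact hge hcx
    · refine hasDerivWithinAt_iff_hasFDerivWithinAt.2 (.of_notMem_closure fun hx => ?_)
      exact hxc.not_ge (closure_minimal inter_subset_right isClosed_Ici hx)
  simpa [← inter_union_distrib_left] using hIic.union hIci

theorem intervalIntegral.integral_indicator_Ioc {f : ℝ → E} {b c x y : ℝ} (hyb : y ≤ b)
    (hyx : y ≤ x) (hxc : x ≤ c) :
    ∫ s in y..x, (Ioc b c).indicator f s = ∫ s in b..max x b, f s := by
  rw [intervalIntegral.integral_of_le hyx, intervalIntegral.integral_of_le (le_max_right x b),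
    setIntegral_indicator measurableSet_Ioc, Ioc_inter_Ioc, max_eq_right hyb,
    min_eq_left hxc]
  rcases le_total b x with hbx | hxb
  · rw [max_eq_left hbx]
  · rw [max_eq_right hxb, Ioc_self, Ioc_eq_empty hxb.not_gt]

theorem prependSegment_of_le {a t : ℝ} (γ : ℝ → E) (v : E) (h : t ≤ a) :
    prependSegment a γ v t = γ 0 + t • v := by
  rw [prependSegment, max_eq_right (sub_nonpos.2 h), min_eq_left h]

theorem prependSegment_of_ge {a t : ℝ} (γ : ℝ → E) (v : E) (h : a ≤ t) :
    prependSegment a γ v t = γ (t - a) + a • v := by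
  rw [prependSegment, max_eq_left (sub_nonneg.2 h), min_eq_right h]

structure IsH2Curve (γ γ' γ'' : ℝ → E) : Prop where
  hasDerivWithinAt : ∀ t ∈ Icc (0:ℝ) 1, HasDerivWithinAt γ (γ' t) (Icc 0 1) t
  eq_add_integral : ∀ t ∈ Icc (0:ℝ) 1, γ' t = γ' 0 + ∫ s in (0:ℝ)..t, γ'' s
  intervalIntegrable : IntervalIntegrable γ'' volume 0 1
  intervalIntegrable_sq : IntervalIntegrable (fun t => ‖γ'' t‖ ^ 2) volume 0 1

namespace IsH2Curve

variable {γ γ' γ'' η η' η'' : ℝ → E}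

theorem continuousOn (h : IsH2Curve γ γ' γ'') : ContinuousOn γ (Icc 0 1) :=
  fun t ht => (h.hasDerivWithinAt t ht).continuousWithinAt

theorem continuousOn_deriv (h : IsH2Curve γ γ' γ'') : ContinuousOn γ' (Icc 0 1) := by
  have hprim := intervalIntegral.continuousOn_primitive_interval' h.intervalIntegrable
    left_mem_uIcc
  rw [uIcc_of_le zero_le_one] at hprim
  exact (continuousOn_const.add hprim).congr h.eq_add_integral

theorem memLp_two (h : IsH2Curve γ γ' γ'') : MemLp γ'' 2 (volume.restrict (Ioc 0 1)) := by
  rw [← uIoc_of_le zero_le_one]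
  exact (memLp_two_iff_integrable_sq_norm h.intervalIntegrable.def'.aestronglyMeasurable).2
    h.intervalIntegrable_sq.def'

theorem memLp_indicator (h : IsH2Curve γ γ' γ'') : MemLp ((Ioc 0 1).indicator γ'') 2 volume :=
  (memLp_indicator_iff_restrict measurableSet_Ioc).2 h.memLp_two

theorem integral_sq_dist_eq_add (h : IsH2Curve γ γ' γ'') (h' : IsH2Curve η η' η'') :
    ∫ t in (0:ℝ)..1, (‖γ t - η t‖ ^ 2 + ‖γ' t - η' t‖ ^ 2 + ‖γ'' t - η'' t‖ ^ 2) =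
      (∫ t in (0:ℝ)..1, ‖γ t - η t‖ ^ 2) + (∫ t in (0:ℝ)..1, ‖γ' t - η' t‖ ^ 2) +
        ∫ t in (0:ℝ)..1, ‖γ'' t - η'' t‖ ^ 2 := by
  have hcont {f g : ℝ → E} (hf : ContinuousOn f (Icc 0 1)) (hg : ContinuousOn g (Icc 0 1)) :
      IntervalIntegrable (fun t => ‖f t - g t‖ ^ 2) volume 0 1 :=
    ((hf.sub hg).norm.pow 2).intervalIntegrable_of_Icc zero_le_one
  have h₀ := hcont h.continuousOn h'.continuousOn
  have h₁ := hcont h.continuousOn_deriv h'.continuousOn_deriv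
  have h₂ : IntervalIntegrable (fun t => ‖γ'' t - η'' t‖ ^ 2) volume 0 1 :=
    (intervalIntegrable_iff_integrableOn_Ioc_of_le zero_le_one).2
      ((h.memLp_two.sub h'.memLp_two).integrable_norm_pow two_ne_zero)
  rw [intervalIntegral.integral_add (h₀.add h₁) h₂, intervalIntegral.integral_add h₀ h₁]

theorem hasDerivWithinAt_prependSegment (h : IsH2Curve γ γ' γ'') {a : ℝ} (ha : 0 ≤ a) :
    ∀ t ∈ Icc (0:ℝ) 1,
      HasDerivWithinAt (prependSegment a γ (γ' 0)) (delayConst a γ' t) (Icc 0 1) t := by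
  intro t ht
  refine hasDerivWithinAt_of_Iic_of_Ici (c := a) (fun hta => ?_) (fun hat => ?_)
  · have hseg : HasDerivAt (fun s : ℝ => γ 0 + s • γ' 0) (γ' 0) t := by
      simpa using ((hasDerivAt_id t).smul_const (γ' 0)).const_add (γ 0)
    rw [delayConst_of_le γ' hta]
    exact hseg.hasDerivWithinAt.congr (fun s hs => prependSegment_of_le γ _ hs.2)
      (prependSegment_of_le γ _ hta)
  · have hmaps : MapsTo (· - a) (Icc 0 1 ∩ Ici a) (Icc 0 1) :=
      fun s hs => ⟨sub_nonneg.2 hs.2, by linarith [hs.1.2]⟩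
    have hshift := (h.hasDerivWithinAt (t - a) (hmaps ⟨ht, hat⟩)).scomp t
      ((hasDerivAt_id t).sub_const a).hasDerivWithinAt hmaps
    rw [delayConst_of_ge γ' hat]
    have hcurve : HasDerivWithinAt (fun s => γ (s - a) + a • γ' 0) (γ' (t - a))
        (Icc 0 1 ∩ Ici a) t := by
      simpa using hshift.add_const (a • γ' 0)
    exact hcurve.congr (fun s hs => prependSegment_of_ge γ _ hs.2)
      (prependSegment_of_ge γ _ hat)

theorem delayConst_eq_add_integral (h : IsH2Curve γ γ' γ'') {a : ℝ} (ha : 0 ≤ a) :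
    ∀ t ∈ Icc (0:ℝ) 1,
      delayConst a γ' t = delayConst a γ' 0 + ∫ s in (0:ℝ)..t, delayZero a γ'' s := by
  intro t ht
  have hint : ∫ s in (0:ℝ)..t, delayZero a γ'' s = ∫ s in (0:ℝ)..max (t - a) 0, γ'' s := by
    simp only [delayZero]
    rw [intervalIntegral.integral_comp_sub_right (fun s => (Ioc 0 1).indicator γ'' s) a,
      zero_sub]
    exact intervalIntegral.integral_indicator_Ioc (by linarith) (by linarith [ht.1])
      (by linarith [ht.2])
  rw [hint, delayConst_of_le γ' ha, ← h.eq_add_integral _ (max_sub_zero_mem_Icc ha ht)]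
  rfl

theorem integrable_indicator (h : IsH2Curve γ γ' γ'') :
    Integrable ((Ioc 0 1).indicator γ'') :=
  ((intervalIntegrable_iff_integrableOn_Ioc_of_le zero_le_one).1
    h.intervalIntegrable).integrable_indicator measurableSet_Ioc

theorem prependSegment (h : IsH2Curve γ γ' γ'') {a : ℝ} (ha : 0 ≤ a) :
    IsH2Curve (prependSegment a γ (γ' 0)) (delayConst a γ') (delayZero a γ'') where
  hasDerivWithinAt := h.hasDerivWithinAt_prependSegment ha
  eq_add_integral := h.delayConst_eq_add_integral ha
  intervalIntegrable := (h.integrable_indicator.comp_sub_right a).intervalIntegrable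
  intervalIntegrable_sq := by
    simp_rw [sq_norm_delayZero]
    exact (((intervalIntegrable_iff_integrableOn_Ioc_of_le zero_le_one).1
      h.intervalIntegrable_sq).integrable_indicator measurableSet_Ioc |>.comp_sub_right
      a).intervalIntegrable

theorem tendsto_integral_sq_dist_prependSegment (h : IsH2Curve γ γ' γ'') :
    Tendsto (fun a => ∫ t in (0:ℝ)..1, (‖γ t - _root_.prependSegment a γ (γ' 0) t‖ ^ 2 +
      ‖γ' t - delayConst a γ' t‖ ^ 2 + ‖γ'' t - delayZero a γ'' t‖ ^ 2)) (𝓝[>] 0) (𝓝 0) := by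
  have hmax : MapsTo (fun p : ℝ × ℝ => max (p.2 - p.1) 0) (Icc 0 1 ×ˢ Icc 0 1) (Icc 0 1) :=
    fun p hp => max_sub_zero_mem_Icc hp.1.1 hp.2
  have hle : 𝓝[>] (0:ℝ) ≤ 𝓝[Icc 0 1] 0 :=
    nhdsWithin_le_of_mem (mem_of_superset (Ioo_mem_nhdsGT one_pos) Ioo_subset_Icc_self)
  have huniform {F : ℝ → ℝ → E} {f : ℝ → E}
      (hF : ContinuousOn (Function.uncurry F) (Icc 0 1 ×ˢ Icc 0 1))
      (hf : EqOn (F 0) f (Icc 0 1)) :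
      Tendsto (fun a => ∫ t in (0:ℝ)..1, ‖f t - F a t‖ ^ 2) (𝓝[>] 0) (𝓝 0) := by
    refine (tendsto_integral_sq_norm_sub_of_tendstoUniformlyOn ?_).mono_left hle
    rw [uIoc_of_le zero_le_one]
    exact ((tendstoUniformlyOn_of_continuousOn_prod isCompact_Icc hF
      (left_mem_Icc.2 zero_le_one)).congr_right hf).mono Ioc_subset_Icc_self
  have h₀ : Tendsto (fun a => ∫ t in (0:ℝ)..1, ‖γ t - _root_.prependSegment a γ (γ' 0) t‖ ^ 2)
      (𝓝[>] 0) (𝓝 0) :=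
    huniform ((h.continuousOn.comp (by fun_prop) hmax).add
      (by fun_prop : Continuous fun p : ℝ × ℝ => min p.2 p.1 • γ' 0).continuousOn)
      fun t ht => by simp [prependSegment_of_ge γ _ ht.1]
  have h₁ : Tendsto (fun a => ∫ t in (0:ℝ)..1, ‖γ' t - delayConst a γ' t‖ ^ 2)
      (𝓝[>] 0) (𝓝 0) :=
    huniform (h.continuousOn_deriv.comp (by fun_prop) hmax)
      fun t ht => by simp [delayConst_of_ge γ' ht.1]
  have h₂ := (tendsto_integral_sq_norm_sub_delayZero h.memLp_indicator).mono_left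
    (nhdsWithin_le_nhds (s := Ioi 0))
  refine ((h₀.add h₁).add h₂).congr' ?_ |>.trans (by simp)
  filter_upwards [self_mem_nhdsWithin] with a (ha : 0 < a)
  exact (h.integral_sq_dist_eq_add (h.prependSegment ha.le)).symm

end IsH2Curve

end NormedSpace

theorem straightening_at_vertices_general
    (d : ℕ) (ℓ : ℝ) (hℓ : 0 < ℓ)
    (γ γ' γ'' : ℝ → EuclideanSpace ℝ (Fin d))
    (hderiv : ∀ t ∈ Icc (0:ℝ) 1, HasDerivWithinAt γ (γ' t) (Icc (0:ℝ) 1) t)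
    (hAC : ∀ t ∈ Icc (0:ℝ) 1, γ' t = γ' 0 + ∫ s in (0:ℝ)..t, γ'' s)
    (hint1 : IntervalIntegrable γ'' volume 0 1)
    (hint2 : IntervalIntegrable (fun t => ‖γ'' t‖ ^ 2) volume 0 1)
    (hspeed : ∀ t ∈ Icc (0:ℝ) 1, ‖γ' t‖ = ℓ) :
    ∀ ε > (0:ℝ),
      ∃ (γt γt' γt'' : ℝ → EuclideanSpace ℝ (Fin d)) (ℓt a : ℝ),
        0 < ℓt ∧ a ∈ Ioo (0:ℝ) 1 ∧
        (∀ t ∈ Icc (0:ℝ) 1, HasDerivWithinAt γt (γt' t) (Icc (0:ℝ) 1) t) ∧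
        (∀ t ∈ Icc (0:ℝ) 1, γt' t = γt' 0 + ∫ s in (0:ℝ)..t, γt'' s) ∧
        IntervalIntegrable γt'' volume 0 1 ∧
        IntervalIntegrable (fun t => ‖γt'' t‖ ^ 2) volume 0 1 ∧
        (∀ t ∈ Icc (0:ℝ) 1, ‖γt' t‖ = ℓt) ∧
        (∀ t ∈ Icc (0:ℝ) a, γt t = γ 0 + (t * ℓt) • (ℓ⁻¹ • γ' 0)) ∧
        a * ℓt ≤ ε ∧
        γt 0 = γ 0 ∧
        Real.sqrt (∫ t in (0:ℝ)..1,
          (‖γ t - γt t‖ ^ 2 + ‖γ' t - γt' t‖ ^ 2 + ‖γ'' t - γt'' t‖ ^ 2)) ≤ ε ∧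
        (ℓt ^ 3)⁻¹ * (∫ t in (0:ℝ)..1, ‖γt'' t‖ ^ 2) + ℓt ≤
          (1 + ε) * ((ℓ ^ 3)⁻¹ * (∫ t in (0:ℝ)..1, ‖γ'' t‖ ^ 2) + ℓ) := by
  intro ε hε
  have hγ : IsH2Curve γ γ' γ'' := ⟨hderiv, hAC, hint1, hint2⟩
  have hlength : Tendsto (fun a : ℝ => a * ℓ) (𝓝[>] 0) (𝓝 0) :=
    ((continuous_mul_const ℓ).tendsto' 0 0 (zero_mul ℓ)).mono_left nhdsWithin_le_nhds
  have hIoo : ∀ᶠ a in 𝓝[>] (0:ℝ), a ∈ Ioo 0 1 := Ioo_mem_nhdsGT one_pos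
  obtain ⟨a, ha, haε, hdist⟩ := (hIoo.and <|
    (hlength.eventually (Iic_mem_nhds hε)).and <|
    hγ.tendsto_integral_sq_dist_prependSegment.eventually (Iio_mem_nhds (pow_pos hε 2))).exists
  have hγa := hγ.prependSegment ha.1.le
  refine ⟨prependSegment a γ (γ' 0), delayConst a γ', delayZero a γ'', ℓ, a, hℓ, ha,
    hγa.hasDerivWithinAt, hγa.eq_add_integral, hγa.intervalIntegrable,
    hγa.intervalIntegrable_sq, fun t ht => hspeed _ (max_sub_zero_mem_Icc ha.1.le ht),
    fun t ht => ?_, haε, ?_, Real.sqrt_le_iff.2 ⟨hε.le, hdist.le⟩, ?_⟩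
  · rw [prependSegment_of_le γ _ ht.2, mul_smul, smul_inv_smul₀ hℓ.ne']
  · simp [prependSegment_of_le γ _ ha.1.le]
  · have henergy : 0 ≤ (ℓ ^ 3)⁻¹ * (∫ t in (0:ℝ)..1, ‖γ'' t‖ ^ 2) + ℓ := by
      have : 0 ≤ ∫ t in (0:ℝ)..1, ‖γ'' t‖ ^ 2 :=
        intervalIntegral.integral_nonneg zero_le_one fun t _ => sq_nonneg ‖γ'' t‖
      positivity
    calc (ℓ ^ 3)⁻¹ * (∫ t in (0:ℝ)..1, ‖delayZero a γ'' t‖ ^ 2) + ℓ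
        ≤ (ℓ ^ 3)⁻¹ * (∫ t in (0:ℝ)..1, ‖γ'' t‖ ^ 2) + ℓ := by
          gcongr
          exact integral_sq_norm_delayZero_le hint2 a
      _ ≤ _ := le_mul_of_one_le_left henergy (by linarith)

/-- **Straightening at vertices.** Given an `H²` curve `γ : [0,1] → ℝ^d` with
constant speed `ℓ > 0` and `ε > 0`, there are an `H²` curve `γ̃` with constant speed `ℓ̃ > 0`
and `a ∈ (0,1)` such that on `[0,a]` the curve `γ̃` is the straight segment
`γ̃(t) = γ(0) + t ℓ̃ (γ'(0)/ℓ)` of length `a ℓ̃ ≤ ε`, `γ̃(0) = γ(0)`,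
`‖γ - γ̃‖_{H²(0,1)} ≤ ε`, and the elastic energy of `γ̃` is at most `(1+ε)` times
that of `γ`. -/
theorem straightening_at_vertices
    (d : ℕ) (hd : 2 ≤ d) (ℓ : ℝ) (hℓ : 0 < ℓ)
    (γ γ' γ'' : ℝ → EuclideanSpace ℝ (Fin d))
    (hderiv : ∀ t ∈ Icc (0:ℝ) 1, HasDerivWithinAt γ (γ' t) (Icc (0:ℝ) 1) t)
    (hAC : ∀ t ∈ Icc (0:ℝ) 1, γ' t = γ' 0 + ∫ s in (0:ℝ)..t, γ'' s)
    (hint1 : IntervalIntegrable γ'' volume 0 1)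
    (hint2 : IntervalIntegrable (fun t => ‖γ'' t‖ ^ 2) volume 0 1)
    (hspeed : ∀ t ∈ Icc (0:ℝ) 1, ‖γ' t‖ = ℓ) :
    ∀ ε > (0:ℝ),
      ∃ (γt γt' γt'' : ℝ → EuclideanSpace ℝ (Fin d)) (ℓt a : ℝ),
        0 < ℓt ∧ a ∈ Ioo (0:ℝ) 1 ∧
        (∀ t ∈ Icc (0:ℝ) 1, HasDerivWithinAt γt (γt' t) (Icc (0:ℝ) 1) t) ∧
        (∀ t ∈ Icc (0:ℝ) 1, γt' t = γt' 0 + ∫ s in (0:ℝ)..t, γt'' s) ∧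
        IntervalIntegrable γt'' volume 0 1 ∧
        IntervalIntegrable (fun t => ‖γt'' t‖ ^ 2) volume 0 1 ∧
        (∀ t ∈ Icc (0:ℝ) 1, ‖γt' t‖ = ℓt) ∧
        (∀ t ∈ Icc (0:ℝ) a, γt t = γ 0 + (t * ℓt) • (ℓ⁻¹ • γ' 0)) ∧
        a * ℓt ≤ ε ∧
        γt 0 = γ 0 ∧
        Real.sqrt (∫ t in (0:ℝ)..1,
          (‖γ t - γt t‖ ^ 2 + ‖γ' t - γt' t‖ ^ 2 + ‖γ'' t - γt'' t‖ ^ 2)) ≤ ε ∧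
        (ℓt ^ 3)⁻¹ * (∫ t in (0:ℝ)..1, ‖γt'' t‖ ^ 2) + ℓt ≤
          (1 + ε) * ((ℓ ^ 3)⁻¹ * (∫ t in (0:ℝ)..1, ‖γ'' t‖ ^ 2) + ℓ) :=
  straightening_at_vertices_general d ℓ hℓ γ γ' γ'' hderiv hAC hint1 hint2 hspeed
end

section
/- Let γ : [0, ℓ] → ℝ² be an arclength-parametrized curve of class H² with ℓ > 0, and let θ = arccos⟨γ'(0), γ'(ℓ)⟩ ∈ [0, π] be the angle between its unit tangent vectors at the two endpoints. Then the elastic energy satisfies ∫₀^ℓ |γ''(s)|² ds + ℓ ≥ 2θ. In particular, ∫₀^ℓ |γ''(s)|² ds + ℓ ≥ (∫₀^ℓ |γ''| ds)²/ℓ + ℓ ≥ 2 ∫₀^ℓ |γ''| ds ≥ 2θ. -/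
/-!
Angles between unit vectors form a metric, and for unit vectors the angle exceeds the chord
`‖u - v‖` only by a cubic error, while `‖γ'(t) - γ'(s)‖ ≤ ∫ₛᵗ ‖γ''‖`. Subdividing `[0, ℓ]` into
pieces on which `∫ ‖γ''‖ ≤ δ` and summing bounds the turning angle by `(1 + O(δ²)) ∫₀^ℓ ‖γ''‖`,
hence by `∫₀^ℓ ‖γ''‖`. The remaining inequalities are Cauchy–Schwarz and AM–GM.
-/

open MeasureTheory Set Filter Topology
open scoped RealInnerProductSpace

open InnerProductGeometry Real in
theorem InnerProductGeometry.angle_le_norm_sub_add_pow_three {V : Type*} [NormedAddCommGroup V]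
    [InnerProductSpace ℝ V] {u v : V} (hu : ‖u‖ = 1) (hv : ‖v‖ = 1) :
    angle u v ≤ ‖u - v‖ + ‖u - v‖ ^ 3 / 3 := by
  set x := angle u v / 2 with hx
  have hx0 : 0 ≤ x := by linarith [angle_nonneg u v]
  have hxπ : x ≤ π / 2 := by linarith [angle_le_pi u v]
  have hsin : 0 ≤ sin x := sin_nonneg_of_nonneg_of_le_pi hx0 (by linarith [pi_pos])
  have hchord : ‖u - v‖ = 2 * sin x := by
    have hsq : ‖u - v‖ ^ 2 = (2 * sin x) ^ 2 := by
      have hcos : cos (angle u v) = 1 - 2 * sin x ^ 2 := by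
        rw [show angle u v = 2 * x by ring, cos_two_mul, cos_sq']; ring
      rw [sq, norm_sub_sq_eq_norm_sq_add_norm_sq_sub_two_mul_norm_mul_norm_mul_cos_angle, hu, hv,
        hcos]
      ring
    exact (pow_left_inj₀ (norm_nonneg _) (by positivity) two_ne_zero).mp hsq
  -- Jordan's inequality: `x ≤ (π / 4) ‖u - v‖`.
  have hx_le : x ≤ ‖u - v‖ := by
    have hjordan := mul_le_sin hx0 hxπ
    rw [div_mul_eq_mul_div, div_le_iff₀ pi_pos] at hjordan
    rw [hchord]
    nlinarith [pi_lt_four]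
  have hsin_ge := sin_ge_sub_cube hx0
  have hcube : x ^ 3 ≤ ‖u - v‖ ^ 3 := pow_le_pow_left₀ hx0 hx_le 3
  linarith

theorem sq_intervalIntegral_le_mul_intervalIntegral_sq {f : ℝ → ℝ} {a b : ℝ} (hab : a ≤ b)
    (hf : IntervalIntegrable f volume a b)
    (hf2 : IntervalIntegrable (fun s => f s ^ 2) volume a b) :
    (∫ s in a..b, f s) ^ 2 ≤ (b - a) * ∫ s in a..b, f s ^ 2 := by
  rcases hab.eq_or_lt with rfl | hlt
  · simp
  set I := ∫ s in a..b, f s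
  set c := I / (b - a)
  have hvar : 0 ≤ ∫ s in a..b, (f s - c) ^ 2 :=
    intervalIntegral.integral_nonneg hab fun _ _ => sq_nonneg _
  have hexpand :
      ∫ s in a..b, (f s - c) ^ 2 = (∫ s in a..b, f s ^ 2) - 2 * c * I + c ^ 2 * (b - a) := by
    rw [intervalIntegral.integral_congr (g := fun s => f s ^ 2 - 2 * c * f s + c ^ 2)
        fun _ _ => by ring,
      intervalIntegral.integral_add (hf2.sub (hf.const_mul _)) intervalIntegrable_const,
      intervalIntegral.integral_sub hf2 (hf.const_mul _), intervalIntegral.integral_const_mul,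
      intervalIntegral.integral_const, smul_eq_mul]
    ring
  have hba : 0 < b - a := sub_pos.2 hlt
  rw [hexpand] at hvar
  have hmean : c * (b - a) = I := div_mul_cancel₀ _ hba.ne'
  nlinarith

section LocalBound

variable {d : ℝ → ℝ → ℝ} {F : ℝ → ℝ} {a b : ℝ}

theorem le_mul_sub_of_local_bound {c δ : ℝ} (hδ : 0 < δ) (hab : a ≤ b)
    (hF : ContinuousOn F (Icc a b)) (htri : ∀ x y z, d x z ≤ d x y + d y z)
    (hloc : ∀ x ∈ Icc a b, ∀ y ∈ Icc x b, F y - F x ≤ δ → d x y ≤ c * (F y - F x)) :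
    d a b ≤ c * (F b - F a) := by
  suffices h : ∀ n : ℕ, ∀ x ∈ Icc a b, F b - F x ≤ n * δ → d x b ≤ c * (F b - F x) by
    obtain ⟨n, hn⟩ := exists_nat_ge ((F b - F a) / δ)
    exact h n a (left_mem_Icc.2 hab) ((div_le_iff₀ hδ).1 hn)
  intro n
  induction n with
  | zero =>
    intro x hx hn
    exact hloc x hx b ⟨hx.2, le_rfl⟩ (by simp at hn; linarith)
  | succ n ih =>
    intro x hx hn
    by_cases hsmall : F b - F x ≤ δ
    · exact hloc x hx b ⟨hx.2, le_rfl⟩ hsmall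
    obtain ⟨y, hy, hFy⟩ : ∃ y ∈ Icc x b, F y = F x + δ :=
      intermediate_value_Icc hx.2 (hF.mono (Icc_subset_Icc_left hx.1))
        ⟨by linarith, by linarith⟩
    have hyab : y ∈ Icc a b := ⟨hx.1.trans hy.1, hy.2⟩
    have h1 := hloc x hx y hy (by linarith)
    have h2 := ih y hyab (by push_cast at hn; linarith)
    calc d x b ≤ d x y + d y b := htri x y b
      _ ≤ c * (F y - F x) + c * (F b - F y) := add_le_add h1 h2
      _ = c * (F b - F x) := by ring

theorem le_sub_of_forall_local_bound (hab : a ≤ b) (hF : ContinuousOn F (Icc a b))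
    (htri : ∀ x y z, d x z ≤ d x y + d y z)
    (hloc : ∀ ε > 0, ∃ δ > 0, ∀ x ∈ Icc a b, ∀ y ∈ Icc x b,
      F y - F x ≤ δ → d x y ≤ (1 + ε) * (F y - F x)) :
    d a b ≤ F b - F a := by
  have hlim : Tendsto (fun ε : ℝ => (1 + ε) * (F b - F a)) (𝓝[>] 0) (𝓝 (F b - F a)) := by
    refine tendsto_nhdsWithin_of_tendsto_nhds ?_
    have : Continuous fun ε : ℝ => (1 + ε) * (F b - F a) := by fun_prop
    simpa using this.tendsto 0
  refine ge_of_tendsto hlim (eventually_nhdsWithin_of_forall fun ε hε => ?_)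
  obtain ⟨δ, hδ, hlocε⟩ := hloc ε hε
  exact le_mul_sub_of_local_bound hδ hab hF htri hlocε

end LocalBound

open InnerProductGeometry in
theorem angle_le_intervalIntegral_norm_of_norm_eq_one {V : Type*} [NormedAddCommGroup V]
    [InnerProductSpace ℝ V] {g g' : ℝ → V} {a b : ℝ} (hab : a ≤ b)
    (hg : ∀ s ∈ Icc a b, g s = g a + ∫ u in a..s, g' u)
    (hg' : IntervalIntegrable g' volume a b) (hunit : ∀ s ∈ Icc a b, ‖g s‖ = 1) :
    angle (g a) (g b) ≤ ∫ s in a..b, ‖g' s‖ := by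
  set F : ℝ → ℝ := fun x => ∫ s in a..x, ‖g' s‖
  have hint : ∀ x ∈ Icc a b, ∀ y ∈ Icc a b, IntervalIntegrable g' volume x y := fun x hx y hy =>
    hg'.mono_set (uIcc_subset_uIcc (Icc_subset_uIcc hx) (Icc_subset_uIcc hy))
  have ha : a ∈ Icc a b := left_mem_Icc.2 hab
  have hchord : ∀ x ∈ Icc a b, ∀ y ∈ Icc x b, ‖g x - g y‖ ≤ F y - F x := by
    intro x hx y hy
    have hyab : y ∈ Icc a b := ⟨hx.1.trans hy.1, hy.2⟩
    have hdiff : g y - g x = ∫ u in x..y, g' u := by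
      rw [hg y hyab, hg x hx, add_sub_add_left_eq_sub,
        intervalIntegral.integral_interval_sub_left (hint a ha y hyab) (hint a ha x hx)]
    rw [norm_sub_rev, hdiff, intervalIntegral.integral_interval_sub_left
      (hint a ha y hyab).norm (hint a ha x hx).norm]
    exact intervalIntegral.norm_integral_le_integral_norm hy.1
  have hF : ContinuousOn F (Icc a b) := by
    simpa [uIcc_of_le hab] using
      intervalIntegral.continuousOn_primitive_interval' hg'.norm left_mem_uIcc
  simpa [F] using le_sub_of_forall_local_bound hab hF (d := fun x y => angle (g x) (g y))
    (fun x y z => angle_le_angle_add_angle _ _ _) fun ε hε => by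
      refine ⟨√ε, Real.sqrt_pos.2 hε, fun x hx y hy hsmall => ?_⟩
      have hyab : y ∈ Icc a b := ⟨hx.1.trans hy.1, hy.2⟩
      have hc := hchord x hx y hy
      have hc0 := norm_nonneg (g x - g y)
      have hD2 : (F y - F x) ^ 2 ≤ ε := by
        simpa [Real.sq_sqrt hε.le] using pow_le_pow_left₀ (hc0.trans hc) hsmall 2
      have hangle := angle_le_norm_sub_add_pow_three (hunit x hx) (hunit y hyab)
      have hcube : ‖g x - g y‖ ^ 3 ≤ (F y - F x) ^ 3 := pow_le_pow_left₀ hc0 hc 3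
      nlinarith

theorem energy_ge_two_angle_general
    (ℓ : ℝ) (hℓ : 0 < ℓ)
    (γ' γ'' : ℝ → EuclideanSpace ℝ (Fin 2))
    (hAC : ∀ s ∈ Icc (0:ℝ) ℓ, γ' s = γ' 0 + ∫ u in (0:ℝ)..s, γ'' u)
    (hint1 : IntervalIntegrable γ'' volume 0 ℓ)
    (hint2 : IntervalIntegrable (fun s => ‖γ'' s‖ ^ 2) volume 0 ℓ)
    (hspeed : ∀ s ∈ Icc (0:ℝ) ℓ, ‖γ' s‖ = 1) :
    2 * Real.arccos ⟪γ' 0, γ' ℓ⟫ ≤ (∫ s in (0:ℝ)..ℓ, ‖γ'' s‖ ^ 2) + ℓ ∧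
    (∫ s in (0:ℝ)..ℓ, ‖γ'' s‖) ^ 2 / ℓ + ℓ ≤ (∫ s in (0:ℝ)..ℓ, ‖γ'' s‖ ^ 2) + ℓ ∧
    2 * (∫ s in (0:ℝ)..ℓ, ‖γ'' s‖) ≤ (∫ s in (0:ℝ)..ℓ, ‖γ'' s‖) ^ 2 / ℓ + ℓ ∧
    2 * Real.arccos ⟪γ' 0, γ' ℓ⟫ ≤ 2 * (∫ s in (0:ℝ)..ℓ, ‖γ'' s‖) := by
  set L := ∫ s in (0:ℝ)..ℓ, ‖γ'' s‖
  set E := ∫ s in (0:ℝ)..ℓ, ‖γ'' s‖ ^ 2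
  have hangle : Real.arccos ⟪γ' 0, γ' ℓ⟫ ≤ L := by
    have h := angle_le_intervalIntegral_norm_of_norm_eq_one hℓ.le hAC hint1 hspeed
    rwa [InnerProductGeometry.angle, hspeed 0 (left_mem_Icc.2 hℓ.le),
      hspeed ℓ (right_mem_Icc.2 hℓ.le), mul_one, div_one] at h
  have hCS : L ^ 2 / ℓ ≤ E := by
    rw [div_le_iff₀' hℓ]
    simpa using sq_intervalIntegral_le_mul_intervalIntegral_sq hℓ.le hint1.norm hint2
  have hAM : 2 * L ≤ L ^ 2 / ℓ + ℓ := by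
    rw [div_add' _ _ _ hℓ.ne', le_div_iff₀ hℓ]
    nlinarith [sq_nonneg (L - ℓ)]
  exact ⟨by linarith, by linarith, hAM, by linarith⟩

/-- For an arclength-parametrized `H²` planar curve `γ : [0,ℓ] → ℝ²` with
`θ = arccos⟨γ'(0), γ'(ℓ)⟩` the angle between its endpoint tangents, the elastic energy
satisfies `∫₀^ℓ ‖γ''‖² + ℓ ≥ 2θ`; indeed
`∫₀^ℓ ‖γ''‖² + ℓ ≥ (∫₀^ℓ ‖γ''‖)²/ℓ + ℓ ≥ 2 ∫₀^ℓ ‖γ''‖ ≥ 2θ`. -/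
theorem energy_ge_two_angle
    (ℓ : ℝ) (hℓ : 0 < ℓ)
    (γ γ' γ'' : ℝ → EuclideanSpace ℝ (Fin 2))
    (hderiv : ∀ s ∈ Icc (0:ℝ) ℓ, HasDerivWithinAt γ (γ' s) (Icc (0:ℝ) ℓ) s)
    (hAC : ∀ s ∈ Icc (0:ℝ) ℓ, γ' s = γ' 0 + ∫ u in (0:ℝ)..s, γ'' u)
    (hint1 : IntervalIntegrable γ'' volume 0 ℓ)
    (hint2 : IntervalIntegrable (fun s => ‖γ'' s‖ ^ 2) volume 0 ℓ)
    (hspeed : ∀ s ∈ Icc (0:ℝ) ℓ, ‖γ' s‖ = 1) :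
    2 * Real.arccos ⟪γ' 0, γ' ℓ⟫ ≤ (∫ s in (0:ℝ)..ℓ, ‖γ'' s‖ ^ 2) + ℓ ∧
    (∫ s in (0:ℝ)..ℓ, ‖γ'' s‖) ^ 2 / ℓ + ℓ ≤ (∫ s in (0:ℝ)..ℓ, ‖γ'' s‖ ^ 2) + ℓ ∧
    2 * (∫ s in (0:ℝ)..ℓ, ‖γ'' s‖) ≤ (∫ s in (0:ℝ)..ℓ, ‖γ'' s‖) ^ 2 / ℓ + ℓ ∧
    2 * Real.arccos ⟪γ' 0, γ' ℓ⟫ ≤ 2 * (∫ s in (0:ℝ)..ℓ, ‖γ'' s‖) :=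
  energy_ge_two_angle_general ℓ hℓ γ' γ'' hAC hint1 hint2 hspeed
end

section
/- (Lower bound for the elastic energy of Theta-networks.) Let γ¹, γ², γ³ be three arclength-parametrized regular curves of class H², γ^i : [0, ℓ_i] → ℝ² with ℓ_i > 0, forming a Theta-network: γ¹(0) = γ²(0) = γ³(0), γ¹(ℓ₁) = γ²(ℓ₂) = γ³(ℓ₃), and at each of the two junctions the three outer unit tangent vectors form pairwise angles of 2π/3, i.e. ⟨γ^i{}'(0), γ^j{}'(0)⟩ = −1/2 for all i ≠ j and ⟨γ^i{}'(ℓ_i), γ^j{}'(ℓ_j)⟩ = −1/2 for all i ≠ j. Then the total elastic energy satisfies Σ_{i=1}^3 ( ∫₀^{ℓ_i} |γ^i{}''(s)|² ds + ℓ_i ) ≥ 16π/3. -/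
/-!
Write each unit tangent as `γⁱ' = exp (i θᵢ)` with a continuous angle `θᵢ`. Chords of the
tangent indicatrix are bounded by the total curvature, `|exp (i θ t) - exp (i θ s)| ≤ ∫ₛᵗ |k|`,
and short arcs of the circle are as long as their chords to first order, so
`|θ t - θ s| ≤ ∫ₛᵗ |k|`.

All three curves have the same chord `w = ∫ exp (i θᵢ)`; let `φ = arg w`. On each curve the
total curvature is at least the sum of the distances (mod `2π`) from `θᵢ 0` and from `θᵢ ℓᵢ`
to `φ`: travel from `θᵢ 0` to one extremum of `θᵢ`, then to the other, then to `θᵢ ℓᵢ`. This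
suffices when the range of `θᵢ` contains a representative of `φ`. Otherwise that range has
length at least `π`: an arc shorter than `π` avoiding `φ` spans an open cone that misses the ray
through `exp (i φ)`, yet it contains `∫ exp (i θᵢ) = |w| exp (i φ)`.

At a junction the three tangent angles are spaced by `2π/3`, so their distances to `φ` add up
to at least `4π/3`. The total curvature is therefore at least `8π/3`, and
`∫ |k|² + ℓ ≥ 2 ∫ |k|` gives `16π/3`.
-/

open MeasureTheory Set
open scoped RealInnerProductSpace Real

namespace Real.Angle

theorem norm_coe_le_abs (x : ℝ) : ‖(x : Angle)‖ ≤ |x| := QuotientAddGroup.norm_mk_le_norm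

theorem norm_coe_of_abs_le_pi {x : ℝ} (hx : |x| ≤ π) : ‖(x : Angle)‖ = |x| :=
  (AddCircle.norm_coe_eq_abs_iff (2 * π) two_pi_pos.ne').2 <| by
    rw [abs_of_pos two_pi_pos]
    linarith

theorem coe_two_pi_div_three_add_self :
    ((2 * π / 3 : ℝ) : Angle) + ((2 * π / 3 : ℝ) : Angle) = -((2 * π / 3 : ℝ) : Angle) := by
  rw [eq_neg_iff_add_eq_zero, ← coe_add, ← coe_add, ← coe_two_pi]
  ring_nf

theorem norm_coe_sub_add_norm_coe_sub_le_of_mem_Icc {m M α β p : ℝ} (hα : α ∈ Icc m M)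
    (hβ : β ∈ Icc m M) (hp : p ∈ Icc m M) :
    ‖(α : Angle) - p‖ + ‖(β : Angle) - p‖ ≤ 2 * (M - m) - |α - β| := by
  rw [← coe_sub, ← coe_sub]
  refine (add_le_add (norm_coe_le_abs _) (norm_coe_le_abs _)).trans ?_
  rcases abs_cases (α - p) with h₁ | h₁ <;> rcases abs_cases (β - p) with h₂ | h₂ <;>
    rcases abs_cases (α - β) with h₃ | h₃ <;> linarith [hα.1, hα.2, hβ.1, hβ.2, hp.1, hp.2]

theorem norm_coe_sub_add_norm_coe_sub_le_of_mem_Icc_sub_two_pi {α β q : ℝ}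
    (hα : α ∈ Icc (q - 2 * π) q) (hβ : β ∈ Icc (q - 2 * π) q) :
    ‖(α : Angle) - q‖ + ‖(β : Angle) - q‖ ≤ 2 * π - |α - β| := by
  have hle : ∀ x ∈ Icc (q - 2 * π) q,
      ‖(x : Angle) - q‖ ≤ q - x ∧ ‖(x : Angle) - q‖ ≤ x - q + 2 * π := fun x hx => by
    have h₁ := norm_coe_le_abs (x - q)
    have h₂ := norm_coe_le_abs (x - q + 2 * π)
    rw [coe_add, coe_two_pi, add_zero] at h₂
    rw [coe_sub] at h₁ h₂
    rw [abs_of_nonpos (by linarith [hx.2])] at h₁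
    rw [abs_of_nonneg (by linarith [hx.1])] at h₂
    exact ⟨by linarith, h₂⟩
  obtain ⟨hα₁, hα₂⟩ := hle α hα
  obtain ⟨hβ₁, hβ₂⟩ := hle β hβ
  rcases abs_cases (α - β) with h | h <;> linarith

theorem four_pi_div_three_le_norm_add_norm_add_norm (θ : Angle) :
    4 * π / 3 ≤ ‖θ‖ + ‖θ + ((2 * π / 3 : ℝ) : Angle)‖ + ‖θ - ((2 * π / 3 : ℝ) : Angle)‖ := by
  set f : ℝ → ℝ := fun x => ‖(x : Angle)‖ + ‖(x : Angle) + ((2 * π / 3 : ℝ) : Angle)‖ +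
    ‖(x : Angle) - ((2 * π / 3 : ℝ) : Angle)‖ with hf_def
  -- adding `2π/3` permutes the three points, which reduces the claim to `|x| ≤ π/3`
  have hf : Function.Periodic f (2 * π / 3) := fun x => by
    simp only [hf_def, coe_add, add_sub_cancel_right, add_assoc, coe_two_pi_div_three_add_self,
      ← sub_eq_add_neg]
    ring
  induction θ using Real.Angle.induction_on with | h x =>
  have hp : 0 < 2 * π / 3 := by positivity
  obtain ⟨hy₁, hy₂⟩ := toIcoMod_mem_Ico hp (-(π / 3)) x
  have hfy : f x = f (toIcoMod hp (-(π / 3)) x) := by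
    rw [← self_sub_toIcoDiv_zsmul hp, hf.sub_zsmul_eq]
  set y := toIcoMod hp (-(π / 3)) x
  change 4 * π / 3 ≤ f x
  have := pi_pos
  rw [hfy, hf_def]
  simp only [← coe_add, ← coe_sub]
  rw [norm_coe_of_abs_le_pi, norm_coe_of_abs_le_pi, norm_coe_of_abs_le_pi]
  · linarith [abs_nonneg y, le_abs_self (y + 2 * π / 3), neg_le_abs (y - 2 * π / 3)]
  all_goals exact abs_le.2 ⟨by linarith, by linarith⟩

theorem four_pi_div_three_le_norm_add_norm_add_norm_of_cos {a b c : Angle}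
    (hab : cos (a - b) = -(1 / 2)) (hbc : cos (b - c) = -(1 / 2))
    (hac : cos (a - c) = -(1 / 2)) :
    4 * π / 3 ≤ ‖a‖ + ‖b‖ + ‖c‖ := by
  have hsum := four_pi_div_three_le_norm_add_norm_add_norm a
  have hωω := coe_two_pi_div_three_add_self
  have hnorm : ‖((2 * π / 3 : ℝ) : Angle)‖ = 2 * π / 3 := by
    rw [norm_coe_of_abs_le_pi] <;> rw [abs_of_pos (by positivity)]
    linarith [pi_pos]
  set ω : Angle := ((2 * π / 3 : ℝ) : Angle)
  have hω : ω ≠ 0 := fun h => by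
    rw [h, norm_zero] at hnorm
    linarith [pi_pos]
  have hcos : ∀ u : Angle, cos u = -(1 / 2) → u = ω ∨ u = -ω := fun u hu => by
    refine cos_eq_iff_eq_or_eq_neg.1 ?_
    rw [hu, cos_coe, show 2 * π / 3 = π - π / 3 by ring, Real.cos_pi_sub, cos_pi_div_three]
  have hac₀ : a - c ≠ 0 := by
    rcases hcos _ hac with h | h <;> rw [h]
    exacts [hω, neg_ne_zero.2 hω]
  have hb : b = a - (a - b) := by abel
  have hc : c = a - (a - b) - (b - c) := by abel
  have hac' : a - c = (a - b) + (b - c) := by abel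
  rcases hcos _ hab with h₁ | h₁ <;> rcases hcos _ hbc with h₂ | h₂
  · rw [hb, hc, h₁, h₂, sub_sub, hωω, sub_neg_eq_add]
    linarith
  · exact absurd (by rw [hac', h₁, h₂, add_neg_cancel]) hac₀
  · exact absurd (by rw [hac', h₁, h₂, neg_add_cancel]) hac₀
  · rw [hb, hc, h₁, h₂, sub_neg_eq_add, sub_neg_eq_add, add_assoc a ω ω, hωω, ← sub_eq_add_neg]
    linarith

end Real.Angle

open Complex Filter Topology

theorem abs_le_mul_norm_exp_mul_I_sub_one {ε x : ℝ} (hε : 1 < ε) (hx : |x| ≤ 1 - ε⁻¹) :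
    |x| ≤ ε * ‖exp (x * I) - 1‖ := by
  have hε' : 0 < ε⁻¹ := inv_pos.2 (zero_lt_one.trans hε)
  have hxI : ‖(x : ℂ) * I‖ = |x| := by simp
  have hquad := norm_exp_sub_one_sub_id_le (x := x * I) (by rw [hxI]; linarith)
  have htri : ‖(x : ℂ) * I‖ ≤ ‖exp (x * I) - 1‖ + ‖exp (x * I) - 1 - x * I‖ := by
    simpa using norm_sub_le (exp (x * I) - 1) (exp (x * I) - 1 - x * I)
  rw [hxI] at htri hquad
  have hεx : 1 ≤ ε * (1 - |x|) := by
    have := mul_le_mul_of_nonneg_left (show ε⁻¹ ≤ 1 - |x| by linarith) (zero_le_one.trans hε.le)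
    rwa [mul_inv_cancel₀ (by positivity)] at this
  nlinarith [abs_nonneg x]

theorem abs_sub_le_of_norm_exp_sub_le {θ N : ℝ → ℝ} {a b : ℝ} (hab : a ≤ b)
    (hθ : ContinuousOn θ (Icc a b)) (hN : ContinuousOn N (Icc a b))
    (hchord : ∀ s ∈ Icc a b, ∀ t ∈ Icc a b, s ≤ t →
      ‖exp (θ t * I) - exp (θ s * I)‖ ≤ N t - N s) :
    |θ b - θ a| ≤ N b - N a := by
  have hNab : 0 ≤ N b - N a :=
    (norm_nonneg _).trans (hchord a (left_mem_Icc.2 hab) b (right_mem_Icc.2 hab) hab)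
  refine (le_iff_forall_one_lt_le_mul₀ hNab).2 fun ε hε => ?_
  set S := {t | |θ t - θ a| ≤ (N t - N a) * ε}
  have hclosed : IsClosed (S ∩ Icc a b) := by
    rw [inter_comm]
    exact isClosed_Icc.isClosed_le ((hθ.sub continuousOn_const).abs)
      ((hN.sub continuousOn_const).mul continuousOn_const)
  refine hclosed.mem_of_ge_of_forall_exists_gt (by simp [S]) hab ?_
  rintro x ⟨hxS, hax, hxb⟩
  have hxI : x ∈ Icc a b := ⟨hax, hxb.le⟩
  have hcont : Tendsto (fun y => |θ y - θ x|) (𝓝[>] x) (𝓝 0) := by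
    have := ((hθ x hxI).mono (Ioc_subset_Icc_self.trans (Icc_subset_Icc_left hax))).tendsto
    rw [nhdsWithin_Ioc_eq_nhdsGT hxb] at this
    simpa using (this.sub_const (θ x)).abs
  -- continuous induction on `t`; over a short step the arc is at most `ε` times the chord
  have hsmall : ∀ᶠ y in 𝓝[>] x, |θ y - θ x| ≤ 1 - ε⁻¹ :=
    hcont.eventually (ge_mem_nhds (by linarith [inv_lt_one_of_one_lt₀ hε]))
  obtain ⟨y, ⟨hxy, hyb⟩, hy⟩ := (Filter.Eventually.and (Ioc_mem_nhdsGT hxb) hsmall).exists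
  refine ⟨y, ?_, hxy, hyb⟩
  have hrot : ‖exp ((θ y - θ x : ℝ) * I) - 1‖ = ‖exp (θ y * I) - exp (θ x * I)‖ := by
    rw [← one_mul ‖_ - 1‖, ← norm_exp_ofReal_mul_I (θ x), ← norm_mul, mul_sub, ← Complex.exp_add,
      mul_one]
    push_cast
    ring_nf
  calc |θ y - θ a| ≤ |θ y - θ x| + |θ x - θ a| := abs_sub_le _ _ _
    _ ≤ ε * ‖exp (θ y * I) - exp (θ x * I)‖ + (N x - N a) * ε := by
        rw [← hrot]
        exact add_le_add (abs_le_mul_norm_exp_mul_I_sub_one hε hy) hxS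
    _ ≤ ε * (N y - N x) + (N x - N a) * ε := by
        gcongr
        exact hchord x hxI y ⟨hax.trans hxy.le, hyb⟩ hxy.le
    _ = (N y - N a) * ε := by ring

theorem exists_continuous_exp_mul_I_eq {z : ℝ → ℂ} {a b : ℝ} (hab : a ≤ b)
    (hz : ContinuousOn z (Icc a b)) (hz1 : ∀ s ∈ Icc a b, ‖z s‖ = 1) :
    ∃ θ : ℝ → ℝ, Continuous θ ∧ ∀ s ∈ Icc a b, exp (θ s * I) = z s := by
  let f : C(ℝ, Circle) :=
    ⟨fun s => ⟨z (projIcc a b hab s), mem_sphere_zero_iff_norm.2 (hz1 _ (projIcc a b hab s).2)⟩,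
      (hz.comp_continuous (continuous_subtype_val.comp continuous_projIcc)
        fun s => (projIcc a b hab s).2).subtype_mk _⟩
  obtain ⟨θ₀, hθ₀⟩ := Circle.exp_surjective (f 0)
  obtain ⟨F, -, hF⟩ :=
    (Circle.isCoveringMap_exp.existsUnique_continuousMap_lifts f 0 θ₀ hθ₀).exists
  refine ⟨F, F.continuous, fun s hs => ?_⟩
  have hlift : (Circle.exp (F s) : ℂ) = z (projIcc a b hab s) :=
    congrArg ((↑) : Circle → ℂ) (congrFun hF s)
  rwa [Circle.coe_exp, projIcc_of_mem hab hs] at hlift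

section Tangent

variable {E : Type*} [NormedAddCommGroup E] [NormedSpace ℝ E] {L : ℝ} {T T'' : ℝ → E}

theorem continuousOn_primitive_Icc (hL : 0 ≤ L) {f : ℝ → E}
    (hf : IntervalIntegrable f volume 0 L) :
    ContinuousOn (fun t => ∫ u in 0..t, f u) (Icc 0 L) := by
  simpa only [uIcc_of_le hL] using
    intervalIntegral.continuousOn_primitive_interval' hf left_mem_uIcc

theorem continuousOn_of_eq_add_integral (hL : 0 ≤ L)
    (hAC : ∀ s ∈ Icc 0 L, T s = T 0 + ∫ u in 0..s, T'' u)
    (hint : IntervalIntegrable T'' volume 0 L) : ContinuousOn T (Icc 0 L) :=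
  (continuousOn_const.add (continuousOn_primitive_Icc hL hint)).congr hAC

theorem norm_sub_le_of_eq_add_integral (hAC : ∀ s ∈ Icc 0 L, T s = T 0 + ∫ u in 0..s, T'' u)
    (hint : IntervalIntegrable T'' volume 0 L) {s t : ℝ} (hs : s ∈ Icc 0 L) (ht : t ∈ Icc 0 L)
    (hst : s ≤ t) : ‖T t - T s‖ ≤ (∫ u in 0..t, ‖T'' u‖) - ∫ u in 0..s, ‖T'' u‖ := by
  have hsub : ∀ x ∈ Icc 0 L, IntervalIntegrable T'' volume 0 x := fun x hx =>
    hint.mono_set <| by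
      rw [uIcc_of_le hx.1, uIcc_of_le (hx.1.trans hx.2)]
      exact Icc_subset_Icc_right hx.2
  rw [hAC t ht, hAC s hs, add_sub_add_left_eq_sub,
    intervalIntegral.integral_interval_sub_left (hsub t ht) (hsub s hs),
    intervalIntegral.integral_interval_sub_left (hsub t ht).norm (hsub s hs).norm]
  exact intervalIntegral.norm_integral_le_integral_norm hst

theorem integral_eq_sub_of_hasDerivWithinAt_Icc [CompleteSpace E] {f f' : ℝ → E} {a b : ℝ}
    (hab : a ≤ b) (hf : ∀ x ∈ Icc a b, HasDerivWithinAt f (f' x) (Icc a b) x)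
    (hf' : ContinuousOn f' (Icc a b)) : ∫ x in a..b, f' x = f b - f a :=
  intervalIntegral.integral_eq_sub_of_hasDerivAt_of_le hab
    (fun x hx => (hf x hx).continuousWithinAt)
    (fun x hx => (hf x (Ioo_subset_Icc_self hx)).hasDerivAt (Icc_mem_nhds hx.1 hx.2))
    (hf'.intervalIntegrable_of_Icc hab)

theorem exists_angle_of_unit_tangent [CompleteSpace E] (e : E →ₗᵢ[ℝ] ℂ) (hL : 0 ≤ L)
    {γ : ℝ → E} (hderiv : ∀ s ∈ Icc 0 L, HasDerivWithinAt γ (T s) (Icc 0 L) s)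
    (hAC : ∀ s ∈ Icc 0 L, T s = T 0 + ∫ u in 0..s, T'' u)
    (hint : IntervalIntegrable T'' volume 0 L) (hunit : ∀ s ∈ Icc 0 L, ‖T s‖ = 1) :
    ∃ θ : ℝ → ℝ, Continuous θ ∧ (∀ s ∈ Icc 0 L, exp (θ s * I) = e (T s)) ∧
      (∫ s in 0..L, exp (θ s * I)) = e (γ L - γ 0) ∧
      ∀ s ∈ Icc 0 L, ∀ t ∈ Icc 0 L, s ≤ t →
        |θ t - θ s| ≤ (∫ u in 0..t, ‖T'' u‖) - ∫ u in 0..s, ‖T'' u‖ := by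
  have hT := continuousOn_of_eq_add_integral hL hAC hint
  obtain ⟨θ, hθ, hθT⟩ := exists_continuous_exp_mul_I_eq (z := fun s => e (T s)) hL
    (e.continuous.comp_continuousOn hT) fun s hs => by simp [hunit s hs]
  refine ⟨θ, hθ, hθT, ?_, fun s hs t ht hst => ?_⟩
  · rw [intervalIntegral.integral_congr fun s hs => hθT s (uIcc_of_le hL ▸ hs),
      e.intervalIntegral_comp_comm, integral_eq_sub_of_hasDerivWithinAt_Icc hL hderiv hT]
  have hsub : Icc s t ⊆ Icc 0 L := Icc_subset_Icc hs.1 ht.2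
  refine abs_sub_le_of_norm_exp_sub_le hst hθ.continuousOn
    ((continuousOn_primitive_Icc hL hint.norm).mono hsub) fun s' hs' t' ht' hst' => ?_
  rw [hθT t' (hsub ht'), hθT s' (hsub hs'), ← map_sub, e.norm_map]
  exact norm_sub_le_of_eq_add_integral hAC hint (hsub hs') (hsub ht') hst'

end Tangent

theorem two_mul_abs_sub_sub_abs_sub_le {θ N : ℝ → ℝ} {a b x y : ℝ}
    (hvar : ∀ s ∈ Icc a b, ∀ t ∈ Icc a b, s ≤ t → |θ t - θ s| ≤ N t - N s)
    (hx : x ∈ Icc a b) (hy : y ∈ Icc a b) :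
    2 * |θ x - θ y| - |θ a - θ b| ≤ N b - N a := by
  wlog hxy : x ≤ y generalizing x y
  · rw [abs_sub_comm]
    exact this hy hx (le_of_not_ge hxy)
  have hab : a ≤ b := hx.1.trans hx.2
  have h₁ := hvar a (left_mem_Icc.2 hab) x hx hx.1
  have h₂ := hvar x hx y hy hxy
  have h₃ := hvar y hy b (right_mem_Icc.2 hab) hy.2
  linarith [abs_sub_le (θ x) (θ a) (θ y), abs_sub_le (θ a) (θ b) (θ y), abs_sub_comm (θ y) (θ x)]

theorem exists_cos_nonpos_forall_cos_sub_pos {a b : ℝ} (ha : 0 < a) (hb : b < 2 * π)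
    (hab : b - a < π) : ∃ β, Real.cos β ≤ 0 ∧ ∀ x ∈ Icc a b, 0 < Real.cos (x - β) := by
  refine ⟨max (π / 2) (min ((a + b) / 2) (3 * π / 2)), ?_, fun x hx => ?_⟩
  · exact Real.cos_nonpos_of_pi_div_two_le_of_le (le_max_left _ _)
      (max_le (by linarith [Real.pi_pos]) ((min_le_right _ _).trans (by linarith)))
  · obtain ⟨hx₁, hx₂⟩ := hx
    apply Real.cos_pos_of_mem_Ioo
    simp only [max_def, min_def]
    split_ifs <;> constructor <;> linarith

theorem integral_cos_sub_eq_re {θ : ℝ → ℝ} {L : ℝ} (hL : 0 ≤ L) (hθ : ContinuousOn θ (Icc 0 L))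
    (c : ℝ) :
    ∫ s in 0..L, Real.cos (θ s - c) = (exp (-(c * I)) * ∫ s in 0..L, exp (θ s * I)).re := by
  have hcont : ContinuousOn (fun s => exp (-(c * I)) * exp (θ s * I)) (uIcc 0 L) := by
    rw [uIcc_of_le hL]
    fun_prop
  rw [← intervalIntegral.integral_const_mul, ← RCLike.re_to_complex,
    ← intervalIntegral.intervalIntegral_re hcont.intervalIntegrable]
  refine intervalIntegral.integral_congr fun s _ => ?_
  simp only [RCLike.re_to_complex]
  rw [← Complex.exp_add, show -(c * I) + θ s * I = ((θ s - c : ℝ) : ℂ) * I by push_cast; ring,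
    exp_ofReal_mul_I_re]

theorem pi_le_of_integral_exp_mul_I_eq {θ : ℝ → ℝ} {L m M q r : ℝ} (hL : 0 < L) (hr : 0 ≤ r)
    (hθ : ContinuousOn θ (Icc 0 L)) (hrange : ∀ s ∈ Icc 0 L, θ s ∈ Icc m M) (hMq : M < q)
    (hqm : q < m + 2 * π) (hint : ∫ s in 0..L, exp (θ s * I) = r * exp (q * I)) :
    π ≤ M - m := by
  by_contra! hnarrow
  obtain ⟨β, hβ, hpos⟩ := exists_cos_nonpos_forall_cos_sub_pos (a := m - q + 2 * π)
    (b := M - q + 2 * π) (by linarith) (by linarith) (by linarith)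
  have hcos_pos : ∀ s ∈ Icc 0 L, 0 < Real.cos (θ s - (q + β)) := fun s hs => by
    have h := hpos (θ s - q + 2 * π)
      ⟨by linarith [(hrange s hs).1], by linarith [(hrange s hs).2]⟩
    rwa [show θ s - q + 2 * π - β = θ s - (q + β) + 2 * π by ring, Real.cos_add_two_pi] at h
  have hintegral_pos : 0 < ∫ s in 0..L, Real.cos (θ s - (q + β)) := by
    refine intervalIntegral.intervalIntegral_pos_of_pos_on ?_
      (fun s hs => hcos_pos s (Ioo_subset_Icc_self hs)) hL
    refine ContinuousOn.intervalIntegrable ?_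
    rw [uIcc_of_le hL.le]
    fun_prop
  have hintegral : ∫ s in 0..L, Real.cos (θ s - (q + β)) = r * Real.cos β := by
    rw [integral_cos_sub_eq_re hL.le hθ, hint, mul_left_comm, ← Complex.exp_add,
      show -(((q + β : ℝ) : ℂ) * I) + q * I = ((-β : ℝ) : ℂ) * I by push_cast; ring,
      re_ofReal_mul, exp_ofReal_mul_I_re, Real.cos_neg]
  nlinarith [mul_nonpos_of_nonneg_of_nonpos hr hβ]

theorem norm_sub_add_norm_sub_le_of_integral_exp_mul_I_eq {θ N : ℝ → ℝ} {L r φ : ℝ}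
    (hL : 0 < L) (hr : 0 ≤ r) (hθ : ContinuousOn θ (Icc 0 L))
    (hvar : ∀ s ∈ Icc 0 L, ∀ t ∈ Icc 0 L, s ≤ t → |θ t - θ s| ≤ N t - N s)
    (hint : ∫ s in 0..L, exp (θ s * I) = r * exp (φ * I)) :
    ‖(θ 0 : Real.Angle) - φ‖ + ‖(θ L : Real.Angle) - φ‖ ≤ N L - N 0 := by
  have h₀ : (0 : ℝ) ∈ Icc 0 L := left_mem_Icc.2 hL.le
  have hL' : L ∈ Icc 0 L := right_mem_Icc.2 hL.le
  obtain ⟨xM, hxM, hM⟩ := isCompact_Icc.exists_isMaxOn ⟨0, h₀⟩ hθ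
  obtain ⟨xm, hxm, hm⟩ := isCompact_Icc.exists_isMinOn ⟨0, h₀⟩ hθ
  have hrange : ∀ s ∈ Icc 0 L, θ s ∈ Icc (θ xm) (θ xM) := fun s hs => ⟨hm hs, hM hs⟩
  have hosc := two_mul_abs_sub_sub_abs_sub_le hvar hxM hxm
  rw [abs_of_nonneg (sub_nonneg.2 (hrange xM hxM).1)] at hosc
  obtain ⟨hq₁, hq₂⟩ := toIcoMod_mem_Ico Real.two_pi_pos (θ xm) φ
  have hqφ := Real.Angle.coe_toIcoMod φ (θ xm)
  set q := toIcoMod Real.two_pi_pos (θ xm) φ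
  rw [← hqφ]
  rcases le_or_gt q (θ xM) with hqM | hMq
  · linarith [Real.Angle.norm_coe_sub_add_norm_coe_sub_le_of_mem_Icc (hrange 0 h₀)
      (hrange L hL') ⟨hq₁, hqM⟩]
  have hexp : exp (q * I) = exp (φ * I) := by
    rw [← Circle.coe_exp, ← Circle.coe_exp, ← Real.Angle.toCircle_coe,
      ← Real.Angle.toCircle_coe, hqφ]
  have hwide := pi_le_of_integral_exp_mul_I_eq hL hr hθ hrange hMq hq₂ (hexp ▸ hint)
  have hmem : ∀ s ∈ Icc 0 L, θ s ∈ Icc (q - 2 * π) q := fun s hs =>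
    ⟨by linarith [(hrange s hs).1], by linarith [(hrange s hs).2]⟩
  linarith [Real.Angle.norm_coe_sub_add_norm_coe_sub_le_of_mem_Icc_sub_two_pi (hmem 0 h₀)
    (hmem L hL')]

theorem Complex.real_inner_exp_mul_I (x y : ℝ) :
    ⟪exp (x * I), exp (y * I)⟫ = Real.cos (x - y) := by
  rw [Complex.inner, ← exp_conj, map_mul, conj_ofReal, conj_I, ← Complex.exp_add,
    show (y : ℂ) * I + x * -I = ((y - x : ℝ) : ℂ) * I by push_cast; ring, exp_ofReal_mul_I_re,
    ← Real.cos_neg, neg_sub]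

theorem four_pi_div_three_le_sum_norm_coe_sub {x : Fin 3 → ℝ}
    (hx : ∀ i j, i ≠ j → Real.cos (x i - x j) = -(1 / 2)) (φ : Real.Angle) :
    4 * π / 3 ≤ ∑ i, ‖(x i : Real.Angle) - φ‖ := by
  have hcos : ∀ i j, i ≠ j →
      Real.Angle.cos (((x i : Real.Angle) - φ) - ((x j : Real.Angle) - φ)) = -(1 / 2) :=
    fun i j hij => by
      rw [sub_sub_sub_cancel_right, ← Real.Angle.coe_sub, Real.Angle.cos_coe, hx i j hij]
  rw [Fin.sum_univ_three]
  exact Real.Angle.four_pi_div_three_le_norm_add_norm_add_norm_of_cos (hcos 0 1 (by decide))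
    (hcos 1 2 (by decide)) (hcos 0 2 (by decide))

theorem two_mul_integral_le_integral_sq_add {g : ℝ → ℝ} {L : ℝ} (hL : 0 ≤ L)
    (hg : IntervalIntegrable g volume 0 L)
    (hg2 : IntervalIntegrable (fun s => g s ^ 2) volume 0 L) :
    2 * ∫ s in 0..L, g s ≤ (∫ s in 0..L, g s ^ 2) + L :=
  calc 2 * ∫ s in 0..L, g s = ∫ s in 0..L, 2 * g s :=
        (intervalIntegral.integral_const_mul _ _).symm
    _ ≤ ∫ s in 0..L, (g s ^ 2 + 1) :=
        intervalIntegral.integral_mono_on hL (hg.const_mul 2) (hg2.add intervalIntegrable_const)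
          fun s _ => by nlinarith [sq_nonneg (g s - 1)]
    _ = (∫ s in 0..L, g s ^ 2) + L := by
        rw [intervalIntegral.integral_add hg2 intervalIntegrable_const]
        simp

/-- Any Theta-network formed by three arclength-parametrized `H²` planar
curves sharing both endpoints, whose unit tangents at each of the two triple junctions form
pairwise angles of `2π/3` (i.e. have pairwise inner products `-1/2`), has total elastic
energy at least `16π/3`. -/
theorem theta_network_energy_lower_bound
    (ℓ : Fin 3 → ℝ) (hℓ : ∀ i, 0 < ℓ i)
    (γ γ' γ'' : Fin 3 → ℝ → EuclideanSpace ℝ (Fin 2))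
    (hderiv : ∀ i, ∀ s ∈ Icc (0:ℝ) (ℓ i),
      HasDerivWithinAt (γ i) (γ' i s) (Icc (0:ℝ) (ℓ i)) s)
    (hAC : ∀ i, ∀ s ∈ Icc (0:ℝ) (ℓ i), γ' i s = γ' i 0 + ∫ u in (0:ℝ)..s, γ'' i u)
    (hint1 : ∀ i, IntervalIntegrable (γ'' i) volume 0 (ℓ i))
    (hint2 : ∀ i, IntervalIntegrable (fun s => ‖γ'' i s‖ ^ 2) volume 0 (ℓ i))
    (hspeed : ∀ i, ∀ s ∈ Icc (0:ℝ) (ℓ i), ‖γ' i s‖ = 1)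
    (hjunc0 : ∀ i j, γ i 0 = γ j 0)
    (hjunc1 : ∀ i j, γ i (ℓ i) = γ j (ℓ j))
    (hang0 : ∀ i j, i ≠ j → ⟪γ' i 0, γ' j 0⟫ = -(1/2 : ℝ))
    (hang1 : ∀ i j, i ≠ j → ⟪γ' i (ℓ i), γ' j (ℓ j)⟫ = -(1/2 : ℝ)) :
    16 * Real.pi / 3 ≤ ∑ i, ((∫ s in (0:ℝ)..(ℓ i), ‖γ'' i s‖ ^ 2) + ℓ i) := by
  let e : EuclideanSpace ℝ (Fin 2) →ₗᵢ[ℝ] ℂ :=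
    Complex.orthonormalBasisOneI.repr.symm.toLinearIsometry
  choose θ hθ hθγ hchord hvar using fun i =>
    exists_angle_of_unit_tangent e (hℓ i).le (hderiv i) (hAC i) (hint1 i) (hspeed i)
  set w := e (γ 0 (ℓ 0) - γ 0 0)
  have hcurve : ∀ i, 2 * (‖(θ i 0 : Real.Angle) - arg w‖ + ‖(θ i (ℓ i) : Real.Angle) - arg w‖) ≤
      (∫ s in 0..ℓ i, ‖γ'' i s‖ ^ 2) + ℓ i := fun i => by
    have hw : ∫ s in 0..ℓ i, exp (θ i s * I) = ‖w‖ * exp (arg w * I) := by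
      rw [hchord i, hjunc0 i 0, hjunc1 i 0, norm_mul_exp_arg_mul_I]
    refine (mul_le_mul_of_nonneg_left ?_ zero_le_two).trans
      (two_mul_integral_le_integral_sq_add (hℓ i).le (hint1 i).norm (hint2 i))
    simpa using norm_sub_add_norm_sub_le_of_integral_exp_mul_I_eq (hℓ i) (norm_nonneg w)
      (hθ i).continuousOn (hvar i) hw
  have hcos : ∀ i j s t, s ∈ Icc 0 (ℓ i) → t ∈ Icc 0 (ℓ j) →
      Real.cos (θ i s - θ j t) = ⟪γ' i s, γ' j t⟫ := fun i j s t hs ht => by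
    rw [← real_inner_exp_mul_I, hθγ i s hs, hθγ j t ht, e.inner_map_map]
  have h₀ := four_pi_div_three_le_sum_norm_coe_sub (x := fun i => θ i 0) (fun i j hij =>
    (hcos i j 0 0 (left_mem_Icc.2 (hℓ i).le) (left_mem_Icc.2 (hℓ j).le)).trans (hang0 i j hij))
    (arg w)
  have h₁ := four_pi_div_three_le_sum_norm_coe_sub (x := fun i => θ i (ℓ i)) (fun i j hij =>
    (hcos i j _ _ (right_mem_Icc.2 (hℓ i).le) (right_mem_Icc.2 (hℓ j).le)).trans (hang1 i j hij))
    (arg w)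
  have htotal := Finset.sum_le_sum fun i (_ : i ∈ Finset.univ) => hcurve i
  rw [← Finset.mul_sum, Finset.sum_add_distrib] at htotal
  linarith
end
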